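/- arXiv:0804.4814 — 7 statements merged into one kernel-verified Lean document; each statement's English description precedes it below -/
import Mathlib

section
/- Let G be a finite graph with automorphism group Aut(G), let M be the transition matrix of simple random walk on G (so M_{gu,gv} = M_{uv} for every automorphism g), and let B be a real matrix indexed by the vertices of G such that for all vertices u, v one has \sum_{g \in Stab(u)} B_{u, gv} = 0, where Stab(u) is the stabilizer of u in Aut(G). Then for every integer k \ge 0 and every vertex v, (B M^k)_{v,v} = 0. -/
open Matrix Finset

/-- For a finite graph `G` with simple random walk transition matrix `M`
and a matrix `B` whose entries sum to zero over each vertex-stabilizer orbit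
(`∑_{g ∈ Stab(u)} B_{u, g v} = 0`), every diagonal entry of `B * M ^ k` vanishes. -/
theorem diag_BMk_eq_zero {V : Type*} [Fintype V] [DecidableEq V]
    (G : SimpleGraph V) [DecidableRel G.Adj]
    (M B : Matrix V V ℝ)
    (hM : ∀ u v : V, M u v = if G.Adj u v then (1 : ℝ) / (G.degree u) else 0)
    (hB : ∀ u v : V,
      ∑ g ∈ Finset.univ.filter
          (fun e : Equiv.Perm V =>
            (∀ a b : V, G.Adj (e a) (e b) ↔ G.Adj a b) ∧ e u = u),
        B u (g v) = 0)
    (k : ℕ) (v : V) :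
    (B * M ^ k) v v = 0 := by
  classical
  set S : Finset (Equiv.Perm V) := Finset.univ.filter
      (fun e : Equiv.Perm V =>
        (∀ a b : V, G.Adj (e a) (e b) ↔ G.Adj a b) ∧ e v = v) with hSdef
  -- M is invariant under automorphisms
  have hMinv : ∀ (g : Equiv.Perm V), (∀ a b : V, G.Adj (g a) (g b) ↔ G.Adj a b) →
      ∀ a b : V, M (g a) (g b) = M a b := by
    intro g hg a b
    have hnb : G.neighborFinset (g a) = (G.neighborFinset a).image g := by
      ext c
      simp only [SimpleGraph.mem_neighborFinset, Finset.mem_image]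
      constructor
      · intro h
        exact ⟨g.symm c, by rw [← hg]; simpa using h, g.apply_symm_apply c⟩
      · rintro ⟨d, hd, rfl⟩
        exact (hg a d).mpr hd
    have hdeg : G.degree (g a) = G.degree a := by
      rw [SimpleGraph.degree, SimpleGraph.degree, hnb,
        Finset.card_image_of_injective _ g.injective]
    rw [hM, hM, hdeg]
    simp [hg]
  -- hence M^n is invariant
  have hMkinv : ∀ n : ℕ, ∀ (g : Equiv.Perm V),
      (∀ a b : V, G.Adj (g a) (g b) ↔ G.Adj a b) →
      ∀ a b : V, (M ^ n) (g a) (g b) = (M ^ n) a b := by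
    intro n
    induction n with
    | zero =>
      intro g hg a b
      simp [Matrix.one_apply, g.injective.eq_iff]
    | succ m ih =>
      intro g hg a b
      rw [pow_succ, Matrix.mul_apply, Matrix.mul_apply]
      rw [← Equiv.sum_comp g (fun c => (M ^ m) (g a) c * M c (g b))]
      exact Finset.sum_congr rfl fun c _ => by rw [ih g hg, hMinv g hg]
  -- main averaging argument
  have hne : (1 : Equiv.Perm V) ∈ S := by
    simp [hSdef]
  have hcard : (S.card : ℝ) ≠ 0 := by
    have := Finset.card_pos.mpr ⟨1, hne⟩
    positivity
  have key : (S.card : ℝ) * (B * M ^ k) v v = 0 := by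
    rw [Matrix.mul_apply]
    calc (S.card : ℝ) * ∑ w, B v w * (M ^ k) w v
        = ∑ _g ∈ S, ∑ w, B v w * (M ^ k) w v := by
          rw [Finset.sum_const, nsmul_eq_mul]
      _ = ∑ g ∈ S, ∑ w, B v (g w) * (M ^ k) w v := by
          refine Finset.sum_congr rfl fun g hg => ?_
          simp only [hSdef, Finset.mem_filter] at hg
          obtain ⟨-, hadj, hgv⟩ := hg
          rw [← Equiv.sum_comp g (fun w => B v w * (M ^ k) w v)]
          refine Finset.sum_congr rfl fun w _ => ?_
          have : (M ^ k) (g w) v = (M ^ k) w v := by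
            conv_lhs => rw [← hgv]
            exact hMkinv k g hadj w v
          rw [this]
      _ = ∑ w, (∑ g ∈ S, B v (g w)) * (M ^ k) w v := by
          rw [Finset.sum_comm]
          exact Finset.sum_congr rfl fun w _ => (Finset.sum_mul ..).symm
      _ = 0 := by
          refine Finset.sum_eq_zero fun w _ => ?_
          rw [hB v w, zero_mul]
  exact (mul_eq_zero.mp key).resolve_left hcard
end

section
/- Let M and B be real n\times n matrices such that M is row-stochastic with nonnegative entries (hence has spectral radius at most 1) and (B M^k)_{v,v} = 0 for all integers k \ge 0 and all indices v. Let f(z) = \sum_{j\ge 0} a_j z^j be analytic on a neighborhood of the closed unit disk. Then the limit lim_{\varepsilon \to 0} \varepsilon^{-2} ( Tr f(M + \varepsilon B) - Tr f(M) ) exists and equals \sum_{j \ge 2} a_j (j/2) \sum_{k_1 + k_2 + 2 = j,\, k_1,k_2 \ge 0} Tr( B M^{k_1} B M^{k_2} ), where this last series converges absolutely. -/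
open Matrix Finset Filter Topology

attribute [local instance] Matrix.linftyOpNormedRing Matrix.linftyOpNormedAlgebra

namespace TPaux
variable {n : ℕ}

lemma entry_le_norm (A : Matrix (Fin n) (Fin n) ℝ) (i j : Fin n) : |A i j| ≤ ‖A‖ := by
  rw [Matrix.linfty_opNorm_def]
  have h1 : (∑ k, ‖A i k‖₊) ≤ (Finset.univ : Finset (Fin n)).sup fun i => ∑ j, ‖A i j‖₊ :=
    Finset.le_sup (f := fun i => ∑ j, ‖A i j‖₊) (Finset.mem_univ i)
  have h2 : |A i j| ≤ ((∑ k, ‖A i k‖₊ : NNReal) : ℝ) := by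
    push_cast
    simp only [coe_nnnorm, Real.norm_eq_abs]
    exact Finset.single_le_sum (f := fun k => |A i k|) (fun k _ => abs_nonneg _) (Finset.mem_univ j)
  exact h2.trans (by exact_mod_cast h1)

lemma trace_le_norm (A : Matrix (Fin n) (Fin n) ℝ) : |A.trace| ≤ n * ‖A‖ := by
  calc |A.trace| = |∑ i, A i i| := by rw [Matrix.trace]; rfl
    _ ≤ ∑ i : Fin n, |A i i| := Finset.abs_sum_le_sum_abs _ _
    _ ≤ ∑ _i : Fin n, ‖A‖ := Finset.sum_le_sum fun i _ => entry_le_norm A i i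
    _ = n * ‖A‖ := by simp [Finset.sum_const]

lemma row_norm_le {M : Matrix (Fin n) (Fin n) ℝ} (hMnonneg : ∀ i j, 0 ≤ M i j)
    (hMrow : ∀ i, ∑ j, M i j = 1) : ‖M‖ ≤ 1 := by
  rw [Matrix.linfty_opNorm_def]
  have : ((Finset.univ : Finset (Fin n)).sup fun i => ∑ j, ‖M i j‖₊) ≤ 1 := by
    apply Finset.sup_le
    intro i _
    have : ((∑ j, ‖M i j‖₊ : NNReal) : ℝ) ≤ ((1 : NNReal) : ℝ) := by
      push_cast
      simp only [coe_nnnorm, Real.norm_eq_abs]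
      have e : ∑ j, |M i j| = ∑ j, M i j :=
        Finset.sum_congr rfl fun j _ => abs_of_nonneg (hMnonneg i j)
      rw [e, hMrow i]
    exact_mod_cast this
  exact_mod_cast this

lemma norm_one_le : ‖(1 : Matrix (Fin n) (Fin n) ℝ)‖ ≤ 1 := by
  apply row_norm_le (M := (1 : Matrix (Fin n) (Fin n) ℝ))
  · intro i j
    by_cases h : i = j <;> simp [Matrix.one_apply, h]
  · intro i
    simp [Matrix.one_apply]

lemma pow_norm_le {M : Matrix (Fin n) (Fin n) ℝ} (hM : ‖M‖ ≤ 1) (k : ℕ) : ‖M ^ k‖ ≤ 1 := by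
  induction k with
  | zero => rw [pow_zero]; exact norm_one_le
  | succ k ih =>
    rw [pow_succ]
    calc ‖M ^ k * M‖ ≤ ‖M ^ k‖ * ‖M‖ := norm_mul_le _ _
      _ ≤ 1 * 1 := mul_le_mul ih hM (norm_nonneg _) zero_le_one
      _ = 1 := one_mul 1



variable (M B : Matrix (Fin n) (Fin n) ℝ)

/-- sum of words of length `j` with exactly one `B`. -/
noncomputable def P (j : ℕ) : Matrix (Fin n) (Fin n) ℝ :=
  ∑ i ∈ Finset.range j, M ^ i * B * M ^ (j - 1 - i)

/-- sum of words of length `j` with exactly two `B`s. -/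
noncomputable def Q (j : ℕ) : Matrix (Fin n) (Fin n) ℝ :=
  ∑ i ∈ Finset.range j, M ^ i * B * P M B (j - 1 - i)

noncomputable def D (ε : ℝ) (j : ℕ) : Matrix (Fin n) (Fin n) ℝ :=
  (M + ε • B) ^ j - M ^ j - ε • P M B j - ε ^ 2 • Q M B j

lemma P_zero : P M B 0 = 0 := by simp [P]

lemma P_succ (j : ℕ) : P M B (j + 1) = P M B j * M + M ^ j * B := by
  rw [P, Finset.sum_range_succ]
  congr 1
  · rw [P, Finset.sum_mul]
    refine Finset.sum_congr rfl fun i hi => ?_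
    have hij : i < j := Finset.mem_range.mp hi
    have : j + 1 - 1 - i = (j - 1 - i) + 1 := by omega
    rw [this, pow_succ, mul_assoc, mul_assoc, mul_assoc]
  · simp

lemma Q_zero : Q M B 0 = 0 := by simp [Q]

lemma Q_succ (j : ℕ) : Q M B (j + 1) = Q M B j * M + P M B j * B := by
  rw [Q, Finset.sum_range_succ]
  have h0 : M ^ j * B * P M B (j + 1 - 1 - j) = 0 := by
    simp [P_zero]
  rw [h0, add_zero]
  have : ∀ i ∈ Finset.range j,
      M ^ i * B * P M B (j + 1 - 1 - i)
        = M ^ i * B * P M B (j - 1 - i) * M + (M ^ i * B * M ^ (j - 1 - i)) * B := by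
    intro i hi
    have hij : i < j := Finset.mem_range.mp hi
    have h1 : j + 1 - 1 - i = (j - 1 - i) + 1 := by omega
    rw [h1, P_succ, mul_add]
    simp only [mul_assoc]
  rw [Finset.sum_congr rfl this, Finset.sum_add_distrib]
  congr 1
  · rw [Q, Finset.sum_mul]
  · rw [P, Finset.sum_mul]

lemma D_zero (ε : ℝ) : D M B ε 0 = 0 := by
  simp [D, P_zero, Q_zero]

lemma D_succ (ε : ℝ) (j : ℕ) :
    D M B ε (j + 1) = D M B ε j * (M + ε • B) + ε ^ 3 • (Q M B j * B) := by
  have hD : (M + ε • B) ^ j = D M B ε j + M ^ j + ε • P M B j + ε ^ 2 • Q M B j := by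
    rw [D]; abel
  rw [D, pow_succ, pow_succ, hD, P_succ, Q_succ]
  simp only [mul_add, add_mul, sub_mul, smul_mul_assoc, mul_smul_comm, smul_add, smul_smul]
  module

lemma trace_word (i l c : ℕ) :
    (M ^ i * B * (M ^ l * B * M ^ c)).trace = (B * M ^ l * B * M ^ (c + i)).trace := by
  have h1 : M ^ i * B * (M ^ l * B * M ^ c) = M ^ i * (B * M ^ l * B * M ^ c) := by
    simp only [mul_assoc]
  rw [h1, Matrix.trace_mul_comm]
  congr 1
  rw [pow_add]
  simp only [mul_assoc]

lemma T_symm (a b : ℕ) :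
    (B * M ^ a * B * M ^ b).trace = (B * M ^ b * B * M ^ a).trace := by
  have h1 : B * M ^ a * B * M ^ b = (B * M ^ a) * (B * M ^ b) := by
    simp only [mul_assoc]
  have h2 : B * M ^ b * B * M ^ a = (B * M ^ b) * (B * M ^ a) := by
    simp only [mul_assoc]
  rw [h1, h2, Matrix.trace_mul_comm]

/-- triangular double-sum identity -/
lemma tri2 (g : ℕ → ℝ) (m : ℕ) :
    ∑ i ∈ Finset.range (m + 1), ∑ l ∈ Finset.range i, g l
      = ∑ l ∈ Finset.range m, ((m - l : ℕ) : ℝ) * g l := by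
  induction m with
  | zero => simp
  | succ m ih =>
    rw [Finset.sum_range_succ, ih, Finset.sum_range_succ (fun l => ((m + 1 - l : ℕ) : ℝ) * g l)]
    have h1 : ∑ l ∈ Finset.range (m + 1), g l
        = ∑ l ∈ Finset.range m, g l + g m := Finset.sum_range_succ _ _
    rw [h1, ← add_assoc, ← Finset.sum_add_distrib]
    have h2 : ∀ l ∈ Finset.range m,
        ((m - l : ℕ) : ℝ) * g l + g l = ((m + 1 - l : ℕ) : ℝ) * g l := by
      intro l hl
      have hlm : l < m := Finset.mem_range.mp hl
      have : ((m + 1 - l : ℕ) : ℝ) = ((m - l : ℕ) : ℝ) + 1 := by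
        have : m + 1 - l = (m - l) + 1 := by omega
        rw [this]; push_cast; ring
      rw [this]; ring
    rw [Finset.sum_congr rfl h2]
    have : ((m + 1 - m : ℕ) : ℝ) = 1 := by norm_num
    rw [this, one_mul]

lemma tri (g : ℕ → ℝ) (m : ℕ) :
    ∑ i ∈ Finset.range (m + 1), ∑ l ∈ Finset.range (m - i), g l
      = ∑ l ∈ Finset.range m, ((m - l : ℕ) : ℝ) * g l := by
  rw [← tri2 g m]
  rw [← Finset.sum_range_reflect (fun i => ∑ l ∈ Finset.range i, g l) (m + 1)]
  refine Finset.sum_congr rfl fun i hi => ?_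
  have : m + 1 - 1 - i = m - i := by omega
  rw [this]

lemma coeff_identity (g : ℕ → ℝ) (m : ℕ) (hg : ∀ l < m, g (m - 1 - l) = g l) :
    ∑ l ∈ Finset.range m, ((m - l : ℕ) : ℝ) * g l
      = (((m : ℝ) + 1) / 2) * ∑ l ∈ Finset.range m, g l := by
  have h2 : ∑ l ∈ Finset.range m, ((m - l : ℕ) : ℝ) * g l
      = ∑ l ∈ Finset.range m, ((l + 1 : ℕ) : ℝ) * g l := by
    rw [← Finset.sum_range_reflect (fun l => ((m - l : ℕ) : ℝ) * g l) m]
    refine Finset.sum_congr rfl fun l hl => ?_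
    have hlm : l < m := Finset.mem_range.mp hl
    have e1 : m - (m - 1 - l) = l + 1 := by omega
    rw [e1, hg l hlm]
  have h3 : ∑ l ∈ Finset.range m, ((m - l : ℕ) : ℝ) * g l
        + ∑ l ∈ Finset.range m, ((l + 1 : ℕ) : ℝ) * g l
      = ((m : ℝ) + 1) * ∑ l ∈ Finset.range m, g l := by
    rw [← Finset.sum_add_distrib, Finset.mul_sum]
    refine Finset.sum_congr rfl fun l hl => ?_
    have hlm : l < m := Finset.mem_range.mp hl
    have : ((m - l : ℕ) : ℝ) = (m : ℝ) - l := by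
      rw [Nat.cast_sub hlm.le]
    rw [this]; push_cast; ring
  linarith [h2, h3]

/-- the filtered pair-sum equals the single-index sum -/
lemma filter_sum_eq (j : ℕ) :
    ∑ p ∈ (Finset.range j ×ˢ Finset.range j).filter (fun p => p.1 + p.2 + 2 = j),
        (B * M ^ p.1 * B * M ^ p.2).trace
      = ∑ l ∈ Finset.range (j - 1), (B * M ^ l * B * M ^ (j - 2 - l)).trace := by
  refine Finset.sum_nbij' (fun p => p.1) (fun l => (l, j - 2 - l)) ?_ ?_ ?_ ?_ ?_
  · intro p hp
    simp only [Finset.mem_filter, Finset.mem_product, Finset.mem_range] at hp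
    simp only [Finset.mem_range]
    omega
  · intro l hl
    simp only [Finset.mem_range] at hl
    simp only [Finset.mem_filter, Finset.mem_product, Finset.mem_range]
    omega
  · intro p hp
    simp only [Finset.mem_filter, Finset.mem_product, Finset.mem_range] at hp
    have : j - 2 - p.1 = p.2 := by omega
    simp [this]
  · intro l hl
    simp
  · intro p hp
    simp only [Finset.mem_filter, Finset.mem_product, Finset.mem_range] at hp
    have : j - 2 - p.1 = p.2 := by omega
    rw [this]

lemma trace_P_eq_zero (hBM : ∀ (k : ℕ) (v : Fin n), (B * M ^ k) v v = 0) (j : ℕ) :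
    (P M B j).trace = 0 := by
  rw [P, Matrix.trace_sum]
  refine Finset.sum_eq_zero fun i hi => ?_
  have h1 : M ^ i * B * M ^ (j - 1 - i) = M ^ i * (B * M ^ (j - 1 - i)) := by
    simp only [mul_assoc]
  rw [h1, Matrix.trace_mul_comm, mul_assoc, ← pow_add]
  have : (B * M ^ (j - 1 - i + i)).trace = ∑ v, (B * M ^ (j - 1 - i + i)) v v := rfl
  rw [this]
  exact Finset.sum_eq_zero fun v _ => hBM _ v

lemma trace_Q (j : ℕ) :
    (Q M B j).trace = ((j : ℝ) / 2) *
      ∑ p ∈ (Finset.range j ×ˢ Finset.range j).filter (fun p => p.1 + p.2 + 2 = j),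
        (B * M ^ p.1 * B * M ^ p.2).trace := by
  rw [filter_sum_eq]
  set g : ℕ → ℝ := fun l => (B * M ^ l * B * M ^ (j - 2 - l)).trace with hg
  have step1 : (Q M B j).trace
      = ∑ i ∈ Finset.range j, ∑ l ∈ Finset.range (j - 1 - i), g l := by
    rw [Q, Matrix.trace_sum]
    refine Finset.sum_congr rfl fun i hi => ?_
    have hij : i < j := Finset.mem_range.mp hi
    rw [P, Finset.mul_sum, Matrix.trace_sum]
    refine Finset.sum_congr rfl fun l hl => ?_
    have hl' : l < j - 1 - i := Finset.mem_range.mp hl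
    rw [trace_word]
    have : j - 1 - i - 1 - l + i = j - 2 - l := by omega
    rw [this]
  rcases Nat.eq_zero_or_pos j with hj | hj
  · subst hj; simp [step1]
  · have hj1 : j = (j - 1) + 1 := by omega
    have step2 : ∑ i ∈ Finset.range j, ∑ l ∈ Finset.range (j - 1 - i), g l
        = ∑ l ∈ Finset.range (j - 1), (((j - 1) - l : ℕ) : ℝ) * g l := by
      rw [hj1]
      have h : ∀ i, j - 1 - i = (j-1) - i := fun i => rfl
      exact tri g (j - 1)
    have hsym : ∀ l < j - 1, g ((j - 1) - 1 - l) = g l := by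
      intro l hl
      have e1 : (j - 1) - 1 - l = j - 2 - l := by omega
      have e2 : j - 2 - (j - 2 - l) = l := by omega
      rw [e1, hg]
      simp only
      rw [e2, T_symm]
    have step3 := coeff_identity g (j - 1) hsym
    have ej : ((j - 1 : ℕ) : ℝ) + 1 = (j : ℝ) := by
      have : (j - 1 : ℕ) + 1 = j := by omega
      exact_mod_cast congrArg (Nat.cast : ℕ → ℝ) this
    rw [step1, step2, step3, ej]

lemma norm_mul3_le (X Y Z : Matrix (Fin n) (Fin n) ℝ) : ‖X * Y * Z‖ ≤ ‖X‖ * ‖Y‖ * ‖Z‖ :=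
  calc ‖X * Y * Z‖ ≤ ‖X * Y‖ * ‖Z‖ := norm_mul_le _ _
    _ ≤ ‖X‖ * ‖Y‖ * ‖Z‖ := mul_le_mul_of_nonneg_right (norm_mul_le X Y) (norm_nonneg Z)

lemma norm_word2_le {M : Matrix (Fin n) (Fin n) ℝ} (hM : ‖M‖ ≤ 1) (B : Matrix (Fin n) (Fin n) ℝ)
    (a b : ℕ) : ‖B * M ^ a * B * M ^ b‖ ≤ ‖B‖ ^ 2 := by
  calc ‖B * M ^ a * B * M ^ b‖ ≤ ‖B * M ^ a * B‖ * ‖M ^ b‖ := norm_mul_le _ _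
    _ ≤ ‖B‖ * ‖M ^ a‖ * ‖B‖ * ‖M ^ b‖ :=
        mul_le_mul_of_nonneg_right (norm_mul3_le B (M ^ a) B) (norm_nonneg _)
    _ ≤ ‖B‖ * 1 * ‖B‖ * 1 := by
        gcongr ‖B‖ * ?_ * ‖B‖ * ?_
        · exact pow_norm_le hM a
        · exact pow_norm_le hM b
    _ = ‖B‖ ^ 2 := by ring

lemma norm_P_le {M : Matrix (Fin n) (Fin n) ℝ} (hM : ‖M‖ ≤ 1) (B : Matrix (Fin n) (Fin n) ℝ)
    (j : ℕ) : ‖P M B j‖ ≤ j * ‖B‖ := by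
  calc ‖P M B j‖ ≤ ∑ i ∈ Finset.range j, ‖M ^ i * B * M ^ (j - 1 - i)‖ := norm_sum_le _ _
    _ ≤ ∑ _i ∈ Finset.range j, ‖B‖ := by
        refine Finset.sum_le_sum fun i _ => ?_
        calc ‖M ^ i * B * M ^ (j - 1 - i)‖ ≤ ‖M ^ i‖ * ‖B‖ * ‖M ^ (j - 1 - i)‖ :=
              norm_mul3_le _ _ _
          _ ≤ 1 * ‖B‖ * 1 := by
              gcongr ?_ * ‖B‖ * ?_
              · exact pow_norm_le hM i
              · exact pow_norm_le hM _
          _ = ‖B‖ := by ring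
    _ = j * ‖B‖ := by simp [Finset.sum_const, mul_comm]

lemma norm_Q_le {M : Matrix (Fin n) (Fin n) ℝ} (hM : ‖M‖ ≤ 1) (B : Matrix (Fin n) (Fin n) ℝ)
    (j : ℕ) : ‖Q M B j‖ ≤ (j : ℝ) ^ 2 * ‖B‖ ^ 2 := by
  calc ‖Q M B j‖ ≤ ∑ i ∈ Finset.range j, ‖M ^ i * B * P M B (j - 1 - i)‖ := norm_sum_le _ _
    _ ≤ ∑ _i ∈ Finset.range j, (j : ℝ) * ‖B‖ ^ 2 := by
        refine Finset.sum_le_sum fun i hi => ?_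
        have hP : ‖P M B (j - 1 - i)‖ ≤ (j : ℝ) * ‖B‖ := by
          calc ‖P M B (j - 1 - i)‖ ≤ ((j - 1 - i : ℕ) : ℝ) * ‖B‖ := norm_P_le hM B _
            _ ≤ (j : ℝ) * ‖B‖ := by
                apply mul_le_mul_of_nonneg_right _ (norm_nonneg _)
                exact Nat.cast_le.mpr (by omega)
        calc ‖M ^ i * B * P M B (j - 1 - i)‖
            ≤ ‖M ^ i‖ * ‖B‖ * ‖P M B (j - 1 - i)‖ := norm_mul3_le _ _ _
          _ ≤ 1 * ‖B‖ * ((j : ℝ) * ‖B‖) := by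
              gcongr ?_ * ‖B‖ * ?_
              · exact pow_norm_le hM i
          _ = (j : ℝ) * ‖B‖ ^ 2 := by ring
    _ = (j : ℝ) ^ 2 * ‖B‖ ^ 2 := by
        rw [Finset.sum_const, Finset.card_range, nsmul_eq_mul]; ring

lemma norm_D_le {M : Matrix (Fin n) (Fin n) ℝ} (hM : ‖M‖ ≤ 1) (B : Matrix (Fin n) (Fin n) ℝ)
    (ε : ℝ) (j : ℕ) :
    ‖D M B ε j‖ ≤ (|ε| * ‖B‖) ^ 3 * (j : ℝ) ^ 3 * (1 + |ε| * ‖B‖) ^ j := by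
  set x := |ε| * ‖B‖ with hx
  have hx0 : 0 ≤ x := mul_nonneg (abs_nonneg _) (norm_nonneg _)
  have hMε : ‖M + ε • B‖ ≤ 1 + x := by
    calc ‖M + ε • B‖ ≤ ‖M‖ + ‖ε • B‖ := norm_add_le _ _
      _ ≤ 1 + x := by
          rw [norm_smul, Real.norm_eq_abs]
          gcongr
  induction j with
  | zero => simp [D_zero]
  | succ j ih =>
    have h1x : (0:ℝ) ≤ 1 + x := by linarith
    have hpow1 : (1:ℝ) ≤ (1 + x) ^ (j + 1) := one_le_pow₀ (by linarith)
    have hQB : ‖ε ^ 3 • (Q M B j * B)‖ ≤ x ^ 3 * (j : ℝ) ^ 2 := by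
      rw [norm_smul, Real.norm_eq_abs, abs_pow]
      have h1 : ‖Q M B j * B‖ ≤ (j : ℝ) ^ 2 * ‖B‖ ^ 2 * ‖B‖ := by
        calc ‖Q M B j * B‖ ≤ ‖Q M B j‖ * ‖B‖ := norm_mul_le _ _
          _ ≤ (j : ℝ) ^ 2 * ‖B‖ ^ 2 * ‖B‖ :=
              mul_le_mul_of_nonneg_right (norm_Q_le hM B j) (norm_nonneg _)
      calc |ε| ^ 3 * ‖Q M B j * B‖ ≤ |ε| ^ 3 * ((j : ℝ) ^ 2 * ‖B‖ ^ 2 * ‖B‖) := by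
            exact mul_le_mul_of_nonneg_left h1 (by positivity)
        _ = x ^ 3 * (j : ℝ) ^ 2 := by rw [hx, mul_pow]; ring
    calc ‖D M B ε (j + 1)‖
        = ‖D M B ε j * (M + ε • B) + ε ^ 3 • (Q M B j * B)‖ := by rw [D_succ]
      _ ≤ ‖D M B ε j * (M + ε • B)‖ + ‖ε ^ 3 • (Q M B j * B)‖ := norm_add_le _ _
      _ ≤ ‖D M B ε j‖ * (1 + x) + x ^ 3 * (j : ℝ) ^ 2 := by
          have hD1 : ‖D M B ε j * (M + ε • B)‖ ≤ ‖D M B ε j‖ * (1 + x) :=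
            calc ‖D M B ε j * (M + ε • B)‖ ≤ ‖D M B ε j‖ * ‖M + ε • B‖ := norm_mul_le _ _
              _ ≤ ‖D M B ε j‖ * (1 + x) :=
                  mul_le_mul_of_nonneg_left hMε (norm_nonneg _)
          exact add_le_add hD1 hQB
      _ ≤ x ^ 3 * (j : ℝ) ^ 3 * (1 + x) ^ j * (1 + x) + x ^ 3 * (j : ℝ) ^ 2 := by
          exact add_le_add (mul_le_mul_of_nonneg_right ih h1x) le_rfl
      _ ≤ x ^ 3 * ((j:ℝ) + 1) ^ 3 * (1 + x) ^ (j + 1) := by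
          have e1 : x ^ 3 * (j : ℝ) ^ 3 * (1 + x) ^ j * (1 + x)
              = x ^ 3 * (j : ℝ) ^ 3 * (1 + x) ^ (j + 1) := by ring
          rw [e1]
          have h2 : x ^ 3 * (j : ℝ) ^ 2 ≤ x ^ 3 * (j : ℝ) ^ 2 * (1 + x) ^ (j+1) := by
            nlinarith [mul_nonneg (pow_nonneg hx0 3) (sq_nonneg (j:ℝ))]
          have h3 : (j:ℝ) ^ 3 + (j:ℝ) ^ 2 ≤ ((j:ℝ) + 1) ^ 3 := by
            nlinarith [Nat.cast_nonneg (α := ℝ) j]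
          calc x ^ 3 * (j : ℝ) ^ 3 * (1 + x) ^ (j + 1) + x ^ 3 * (j : ℝ) ^ 2
              ≤ x ^ 3 * (j : ℝ) ^ 3 * (1 + x) ^ (j + 1)
                  + x ^ 3 * (j : ℝ) ^ 2 * (1 + x) ^ (j+1) := by linarith
            _ = x ^ 3 * ((j:ℝ) ^ 3 + (j:ℝ) ^ 2) * (1 + x) ^ (j+1) := by ring
            _ ≤ x ^ 3 * ((j:ℝ) + 1) ^ 3 * (1 + x) ^ (j + 1) := by
                have := mul_le_mul_of_nonneg_left h3 (pow_nonneg hx0 3)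
                exact mul_le_mul_of_nonneg_right this (pow_nonneg h1x _)
      _ = x ^ 3 * ((j + 1 : ℕ) : ℝ) ^ 3 * (1 + x) ^ (j + 1) := by push_cast; ring

lemma geom_dominate (k : ℕ) {q r : ℝ} (hq : 0 ≤ q) (hqr : q < r) :
    ∃ C : ℝ, 0 ≤ C ∧ ∀ j : ℕ, (j : ℝ) ^ k * q ^ j ≤ C * r ^ j := by
  have hr : 0 < r := lt_of_le_of_lt hq hqr
  have h1 : ‖q / r‖ < 1 := by
    rw [Real.norm_eq_abs, abs_of_nonneg (div_nonneg hq hr.le)]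
    exact (div_lt_one hr).mpr hqr
  have h2 : Tendsto (fun j : ℕ => (j : ℝ) ^ k * (q / r) ^ j) atTop (𝓝 0) :=
    (summable_pow_mul_geometric_of_norm_lt_one k h1).tendsto_atTop_zero
  obtain ⟨C, hC⟩ := h2.bddAbove_range
  refine ⟨max C 0, le_max_right _ _, fun j => ?_⟩
  have hCj : (j : ℝ) ^ k * (q / r) ^ j ≤ C := hC (Set.mem_range_self j)
  have hrj : (0 : ℝ) < r ^ j := pow_pos hr j
  have e : (j : ℝ) ^ k * q ^ j = ((j : ℝ) ^ k * (q / r) ^ j) * r ^ j := by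
    rw [div_pow]
    field_simp
  rw [e]
  exact mul_le_mul_of_nonneg_right (hCj.trans (le_max_left _ _)) hrj.le

end TPaux

/-- For a row-stochastic matrix `M`, a matrix `B` with
`(B M^k)_{v,v} = 0` for all `k`, and `f(z) = ∑ a_j z^j` analytic in a neighborhood of the
closed unit disk, the limit `lim_{ε→0} ε⁻²(Tr f(M+εB) - Tr f(M))` exists and equals
`∑_j a_j (j/2) ∑_{k₁+k₂+2=j} Tr(B M^{k₁} B M^{k₂})`, the last series converging absolutely. -/
theorem trace_perturbation_second_order {n : ℕ} (M B : Matrix (Fin n) (Fin n) ℝ)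
    (hMnonneg : ∀ i j, 0 ≤ M i j) (hMrow : ∀ i, ∑ j, M i j = 1)
    (hBM : ∀ (k : ℕ) (v : Fin n), (B * M ^ k) v v = 0)
    (a : ℕ → ℝ) (hrad : ∃ r : ℝ, 1 < r ∧ Summable fun j => |a j| * r ^ j) :
    Summable (fun j : ℕ =>
      |a j * ((j : ℝ) / 2) *
        ∑ p ∈ (Finset.range j ×ˢ Finset.range j).filter (fun p => p.1 + p.2 + 2 = j),
          (B * M ^ p.1 * B * M ^ p.2).trace|) ∧
    Tendsto
      (fun ε : ℝ =>
        ε⁻¹ ^ 2 *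
          ((∑' j : ℕ, a j * ((M + ε • B) ^ j).trace) - ∑' j : ℕ, a j * (M ^ j).trace))
      (𝓝[≠] 0)
      (𝓝 (∑' j : ℕ, a j * ((j : ℝ) / 2) *
        ∑ p ∈ (Finset.range j ×ˢ Finset.range j).filter (fun p => p.1 + p.2 + 2 = j),
          (B * M ^ p.1 * B * M ^ p.2).trace)) := by
  classical
  obtain ⟨r, hr1, hrs⟩ := hrad
  have hM : ‖M‖ ≤ 1 := TPaux.row_norm_le hMnonneg hMrow
  have hb0 : (0:ℝ) ≤ ‖B‖ := norm_nonneg B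
  set r1 : ℝ := (1 + r) / 2 with hr1def
  have h11 : 1 < r1 := by rw [hr1def]; linarith
  have h1r : r1 < r := by rw [hr1def]; linarith
  obtain ⟨C2, hC2nn, hC2⟩ := TPaux.geom_dominate 2 (q := 1) (r := r) zero_le_one hr1
  obtain ⟨C3, hC3nn, hC3⟩ := TPaux.geom_dominate 3 (q := r1) (r := r) (by linarith) h1r
  have hC2' : ∀ j : ℕ, (j : ℝ) ^ 2 ≤ C2 * r ^ j := by
    intro j; have := hC2 j; simpa using this
  have hrge1 : ∀ j : ℕ, (1 : ℝ) ≤ r ^ j := fun j => one_le_pow₀ hr1.le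
  -- notation
  set S : ℕ → ℝ := fun j =>
    ∑ p ∈ (Finset.range j ×ˢ Finset.range j).filter (fun p => p.1 + p.2 + 2 = j),
      (B * M ^ p.1 * B * M ^ p.2).trace with hSdef
  -- bound on S
  have hSb : ∀ j : ℕ, |S j| ≤ (j : ℝ) * ((n : ℝ) * ‖B‖ ^ 2) := by
    intro j
    rw [hSdef]
    simp only
    rw [TPaux.filter_sum_eq]
    calc |∑ l ∈ Finset.range (j - 1), (B * M ^ l * B * M ^ (j - 2 - l)).trace|
        ≤ ∑ l ∈ Finset.range (j - 1), |(B * M ^ l * B * M ^ (j - 2 - l)).trace| :=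
          Finset.abs_sum_le_sum_abs _ _
      _ ≤ ∑ _l ∈ Finset.range (j - 1), (n : ℝ) * ‖B‖ ^ 2 := by
          refine Finset.sum_le_sum fun l _ => ?_
          calc |(B * M ^ l * B * M ^ (j - 2 - l)).trace|
              ≤ (n : ℝ) * ‖B * M ^ l * B * M ^ (j - 2 - l)‖ := TPaux.trace_le_norm _
            _ ≤ (n : ℝ) * ‖B‖ ^ 2 := by
                exact mul_le_mul_of_nonneg_left (TPaux.norm_word2_le hM B _ _) (Nat.cast_nonneg n)
      _ = ((j - 1 : ℕ) : ℝ) * ((n : ℝ) * ‖B‖ ^ 2) := by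
          rw [Finset.sum_const, Finset.card_range, nsmul_eq_mul]
      _ ≤ (j : ℝ) * ((n : ℝ) * ‖B‖ ^ 2) := by
          apply mul_le_mul_of_nonneg_right _ (by positivity)
          exact Nat.cast_le.mpr (Nat.sub_le _ _)
  -- summability of target series
  have key1 : ∀ j : ℕ, |a j * ((j : ℝ) / 2) * S j|
      ≤ ((n : ℝ) * ‖B‖ ^ 2 * C2) * (|a j| * r ^ j) := by
    intro j
    have e1 : |a j * ((j : ℝ) / 2) * S j| = |a j| * ((j : ℝ) / 2) * |S j| := by
      rw [abs_mul, abs_mul, abs_of_nonneg (by positivity : (0:ℝ) ≤ (j : ℝ) / 2)]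
    rw [e1]
    calc |a j| * ((j : ℝ) / 2) * |S j|
        ≤ |a j| * ((j : ℝ) / 2) * ((j : ℝ) * ((n : ℝ) * ‖B‖ ^ 2)) := by
          apply mul_le_mul_of_nonneg_left (hSb j) (by positivity)
      _ = ((n : ℝ) * ‖B‖ ^ 2 / 2) * ((j : ℝ) ^ 2 * |a j|) := by ring
      _ ≤ ((n : ℝ) * ‖B‖ ^ 2 / 2) * ((C2 * r ^ j) * |a j|) := by
          apply mul_le_mul_of_nonneg_left _ (by positivity)
          exact mul_le_mul_of_nonneg_right (hC2' j) (abs_nonneg _)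
      _ = ((n : ℝ) * ‖B‖ ^ 2 * C2 / 2) * (|a j| * r ^ j) := by ring
      _ ≤ ((n : ℝ) * ‖B‖ ^ 2 * C2) * (|a j| * r ^ j) := by
          have h0 : (0:ℝ) ≤ ((n : ℝ) * ‖B‖ ^ 2 * C2 / 2) * (|a j| * r ^ j) := by positivity
          nlinarith [mul_nonneg (mul_nonneg (mul_nonneg (Nat.cast_nonneg (α := ℝ) n)
            (sq_nonneg ‖B‖)) hC2nn) (mul_nonneg (abs_nonneg (a j)) (pow_nonneg (by linarith : (0:ℝ) ≤ r) j))]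
  have hsummable1 : Summable (fun j : ℕ => |a j * ((j : ℝ) / 2) * S j|) :=
    Summable.of_nonneg_of_le (fun j => abs_nonneg _) key1 (hrs.mul_left _)
  refine ⟨hsummable1, ?_⟩
  -- ===== Tendsto part =====
  have hPtr := TPaux.trace_P_eq_zero M B hBM
  have hQtr : ∀ j : ℕ, (TPaux.Q M B j).trace = ((j : ℝ) / 2) * S j := fun j =>
    TPaux.trace_Q M B j
  -- trace decomposition
  have hdecomp : ∀ (ε : ℝ) (j : ℕ), a j * ((M + ε • B) ^ j).trace
      = a j * (M ^ j).trace + ε ^ 2 * (a j * (TPaux.Q M B j).trace)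
        + a j * (TPaux.D M B ε j).trace := by
    intro ε j
    have hD : (M + ε • B) ^ j
        = TPaux.D M B ε j + M ^ j + ε • TPaux.P M B j + ε ^ 2 • TPaux.Q M B j := by
      rw [TPaux.D]; abel
    rw [hD, Matrix.trace_add, Matrix.trace_add, Matrix.trace_add, Matrix.trace_smul,
      Matrix.trace_smul, hPtr]
    simp only [smul_eq_mul, smul_zero, mul_zero, add_zero]
    ring
  -- basic trace bounds
  have htM : ∀ j : ℕ, |(M ^ j).trace| ≤ (n : ℝ) := by
    intro j
    calc |(M ^ j).trace| ≤ (n : ℝ) * ‖M ^ j‖ := TPaux.trace_le_norm _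
      _ ≤ (n : ℝ) * 1 := mul_le_mul_of_nonneg_left (TPaux.pow_norm_le hM j) (Nat.cast_nonneg n)
      _ = (n : ℝ) := mul_one _
  have htQ : ∀ j : ℕ, |(TPaux.Q M B j).trace| ≤ (n : ℝ) * ((j : ℝ) ^ 2 * ‖B‖ ^ 2) := by
    intro j
    calc |(TPaux.Q M B j).trace| ≤ (n : ℝ) * ‖TPaux.Q M B j‖ := TPaux.trace_le_norm _
      _ ≤ (n : ℝ) * ((j : ℝ) ^ 2 * ‖B‖ ^ 2) :=
          mul_le_mul_of_nonneg_left (TPaux.norm_Q_le hM B j) (Nat.cast_nonneg n)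
  have htD : ∀ ε : ℝ, |ε| * ‖B‖ ≤ r1 - 1 → ∀ j : ℕ,
      |(TPaux.D M B ε j).trace| ≤ (n : ℝ) * ‖B‖ ^ 3 * |ε| ^ 3 * ((j : ℝ) ^ 3 * r1 ^ j) := by
    intro ε hε j
    have hx0 : (0:ℝ) ≤ |ε| * ‖B‖ := by positivity
    have h1x : 1 + |ε| * ‖B‖ ≤ r1 := by linarith
    calc |(TPaux.D M B ε j).trace| ≤ (n : ℝ) * ‖TPaux.D M B ε j‖ := TPaux.trace_le_norm _
      _ ≤ (n : ℝ) * ((|ε| * ‖B‖) ^ 3 * (j : ℝ) ^ 3 * (1 + |ε| * ‖B‖) ^ j) :=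
          mul_le_mul_of_nonneg_left (TPaux.norm_D_le hM B ε j) (Nat.cast_nonneg n)
      _ ≤ (n : ℝ) * ((|ε| * ‖B‖) ^ 3 * (j : ℝ) ^ 3 * r1 ^ j) := by
          apply mul_le_mul_of_nonneg_left _ (Nat.cast_nonneg n)
          apply mul_le_mul_of_nonneg_left _ (by positivity)
          exact pow_le_pow_left₀ (by linarith) h1x j
      _ = (n : ℝ) * ‖B‖ ^ 3 * |ε| ^ 3 * ((j : ℝ) ^ 3 * r1 ^ j) := by
          rw [mul_pow]; ring
  -- summability statements
  have sA : Summable (fun j : ℕ => a j * (M ^ j).trace) := by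
    apply Summable.of_norm
    apply Summable.of_nonneg_of_le (fun j => norm_nonneg _) _ (hrs.mul_left (n : ℝ))
    intro j
    rw [Real.norm_eq_abs, abs_mul]
    calc |a j| * |(M ^ j).trace| ≤ |a j| * (n : ℝ) :=
          mul_le_mul_of_nonneg_left (htM j) (abs_nonneg _)
      _ = (n : ℝ) * (|a j| * 1) := by ring
      _ ≤ (n : ℝ) * (|a j| * r ^ j) := by
          gcongr
          exact hrge1 j
  have sQ : Summable (fun j : ℕ => a j * (TPaux.Q M B j).trace) := by
    apply Summable.of_norm
    apply Summable.of_nonneg_of_le (fun j => norm_nonneg _) _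
      (hrs.mul_left ((n : ℝ) * ‖B‖ ^ 2 * C2))
    intro j
    rw [Real.norm_eq_abs, abs_mul]
    calc |a j| * |(TPaux.Q M B j).trace|
        ≤ |a j| * ((n : ℝ) * ((j : ℝ) ^ 2 * ‖B‖ ^ 2)) :=
          mul_le_mul_of_nonneg_left (htQ j) (abs_nonneg _)
      _ ≤ |a j| * ((n : ℝ) * ((C2 * r ^ j) * ‖B‖ ^ 2)) := by
          apply mul_le_mul_of_nonneg_left _ (abs_nonneg _)
          apply mul_le_mul_of_nonneg_left _ (Nat.cast_nonneg n)
          exact mul_le_mul_of_nonneg_right (hC2' j) (sq_nonneg _)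
      _ = (n : ℝ) * ‖B‖ ^ 2 * C2 * (|a j| * r ^ j) := by ring
  have sDbound : ∀ ε : ℝ, |ε| * ‖B‖ ≤ r1 - 1 → ∀ j : ℕ,
      |a j * (TPaux.D M B ε j).trace|
        ≤ (n : ℝ) * ‖B‖ ^ 3 * |ε| ^ 3 * C3 * (|a j| * r ^ j) := by
    intro ε hε j
    rw [abs_mul]
    calc |a j| * |(TPaux.D M B ε j).trace|
        ≤ |a j| * ((n : ℝ) * ‖B‖ ^ 3 * |ε| ^ 3 * ((j : ℝ) ^ 3 * r1 ^ j)) :=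
          mul_le_mul_of_nonneg_left (htD ε hε j) (abs_nonneg _)
      _ ≤ |a j| * ((n : ℝ) * ‖B‖ ^ 3 * |ε| ^ 3 * (C3 * r ^ j)) := by
          apply mul_le_mul_of_nonneg_left _ (abs_nonneg _)
          exact mul_le_mul_of_nonneg_left (hC3 j) (by positivity)
      _ = (n : ℝ) * ‖B‖ ^ 3 * |ε| ^ 3 * C3 * (|a j| * r ^ j) := by ring
  have sD : ∀ ε : ℝ, |ε| * ‖B‖ ≤ r1 - 1 →
      Summable (fun j : ℕ => a j * (TPaux.D M B ε j).trace) := by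
    intro ε hε
    apply Summable.of_norm
    apply Summable.of_nonneg_of_le (fun j => norm_nonneg _) _
      (hrs.mul_left ((n : ℝ) * ‖B‖ ^ 3 * |ε| ^ 3 * C3))
    intro j
    rw [Real.norm_eq_abs]
    exact sDbound ε hε j
  have sX : ∀ ε : ℝ, |ε| * ‖B‖ ≤ r1 - 1 →
      Summable (fun j : ℕ => a j * ((M + ε • B) ^ j).trace) := by
    intro ε hε
    apply Summable.congr ((sA.add ((sQ.mul_left (ε ^ 2)).add (sD ε hε))))
    intro j
    rw [hdecomp ε j]; ring
  -- the key tsum identity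
  have key2 : ∀ ε : ℝ, |ε| * ‖B‖ ≤ r1 - 1 →
      (∑' j : ℕ, a j * ((M + ε • B) ^ j).trace) - (∑' j : ℕ, a j * (M ^ j).trace)
        = ε ^ 2 * (∑' j : ℕ, a j * (TPaux.Q M B j).trace)
          + ∑' j : ℕ, a j * (TPaux.D M B ε j).trace := by
    intro ε hε
    rw [← Summable.tsum_sub (sX ε hε) sA, ← tsum_mul_left,
      ← Summable.tsum_add (sQ.mul_left (ε ^ 2)) (sD ε hε)]
    exact tsum_congr fun j => by rw [hdecomp ε j]; ring
  have hAL : (∑' j : ℕ, a j * (TPaux.Q M B j).trace)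
      = ∑' j : ℕ, a j * ((j : ℝ) / 2) * S j :=
    tsum_congr fun j => by rw [hQtr j]; ring
  -- error bound
  set K : ℝ := (n : ℝ) * ‖B‖ ^ 3 * C3 * (∑' j : ℕ, |a j| * r ^ j) with hKdef
  have hK0 : 0 ≤ K := by
    rw [hKdef]
    have : 0 ≤ ∑' j : ℕ, |a j| * r ^ j :=
      tsum_nonneg fun j => by positivity
    positivity
  have hE : ∀ ε : ℝ, |ε| * ‖B‖ ≤ r1 - 1 →
      |∑' j : ℕ, a j * (TPaux.D M B ε j).trace| ≤ |ε| ^ 3 * K := by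
    intro ε hε
    have hsn : Summable (fun j : ℕ => ‖a j * (TPaux.D M B ε j).trace‖) := by
      apply Summable.of_nonneg_of_le (fun j => norm_nonneg _) _
        (hrs.mul_left ((n : ℝ) * ‖B‖ ^ 3 * |ε| ^ 3 * C3))
      intro j
      rw [Real.norm_eq_abs]
      exact sDbound ε hε j
    calc |∑' j : ℕ, a j * (TPaux.D M B ε j).trace|
        ≤ ∑' j : ℕ, ‖a j * (TPaux.D M B ε j).trace‖ := by
          rw [← Real.norm_eq_abs]
          exact norm_tsum_le_tsum_norm hsn
      _ ≤ ∑' j : ℕ, (n : ℝ) * ‖B‖ ^ 3 * |ε| ^ 3 * C3 * (|a j| * r ^ j) := by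
          apply Summable.tsum_le_tsum _ hsn (hrs.mul_left _)
          intro j
          rw [Real.norm_eq_abs]
          exact sDbound ε hε j
      _ = (n : ℝ) * ‖B‖ ^ 3 * |ε| ^ 3 * C3 * (∑' j : ℕ, |a j| * r ^ j) := tsum_mul_left
      _ = |ε| ^ 3 * K := by rw [hKdef]; ring
  -- the small neighborhood
  set δ : ℝ := (r1 - 1) / (‖B‖ + 1) with hδdef
  have hδpos : 0 < δ := by
    rw [hδdef]
    apply div_pos (by linarith) (by linarith)
  have hcond : ∀ ε : ℝ, |ε| ≤ δ → |ε| * ‖B‖ ≤ r1 - 1 := by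
    intro ε hε
    have h1 : |ε| * ‖B‖ ≤ δ * (‖B‖ + 1) := by
      nlinarith [abs_nonneg ε]
    have h2 : δ * (‖B‖ + 1) = r1 - 1 := by
      rw [hδdef]; field_simp
    linarith
  have hev1 : ∀ᶠ ε : ℝ in 𝓝[≠] (0:ℝ), |ε| ≤ δ := by
    have h : ∀ᶠ ε : ℝ in 𝓝 (0:ℝ), |ε| ≤ δ := by
      filter_upwards [Metric.ball_mem_nhds (0:ℝ) hδpos] with x hx
      rw [Metric.mem_ball, Real.dist_eq, sub_zero] at hx
      exact hx.le
    exact h.filter_mono nhdsWithin_le_nhds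
  have hev2 : ∀ᶠ ε : ℝ in 𝓝[≠] (0:ℝ), ε ≠ 0 := eventually_mem_nhdsWithin
  -- error term tends to zero
  have herr : Tendsto (fun ε : ℝ => ε⁻¹ ^ 2 * ∑' j : ℕ, a j * (TPaux.D M B ε j).trace)
      (𝓝[≠] (0:ℝ)) (𝓝 0) := by
    apply squeeze_zero_norm' (a := fun ε : ℝ => K * |ε|)
    · filter_upwards [hev1, hev2] with ε hε1 hε2
      have hεpos : 0 < |ε| := abs_pos.mpr hε2
      rw [Real.norm_eq_abs, abs_mul, abs_pow, abs_inv]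
      calc |ε|⁻¹ ^ 2 * |∑' j : ℕ, a j * (TPaux.D M B ε j).trace|
          ≤ |ε|⁻¹ ^ 2 * (|ε| ^ 3 * K) :=
            mul_le_mul_of_nonneg_left (hE ε (hcond ε hε1)) (by positivity)
        _ = (|ε|⁻¹ * |ε|) ^ 2 * (|ε| * K) := by ring
        _ = K * |ε| := by
            rw [inv_mul_cancel₀ (ne_of_gt hεpos), one_pow, one_mul, mul_comm]
    · have h : Tendsto (fun ε : ℝ => K * |ε|) (𝓝 (0:ℝ)) (𝓝 (K * |0|)) :=
        (continuous_const.mul continuous_abs).tendsto 0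
      simpa using h.mono_left nhdsWithin_le_nhds
  -- assemble
  have hmain : Tendsto
      (fun ε : ℝ => (∑' j : ℕ, a j * (TPaux.Q M B j).trace)
        + ε⁻¹ ^ 2 * ∑' j : ℕ, a j * (TPaux.D M B ε j).trace)
      (𝓝[≠] (0:ℝ))
      (𝓝 ((∑' j : ℕ, a j * (TPaux.Q M B j).trace) + 0)) :=
    tendsto_const_nhds.add herr
  rw [add_zero, hAL] at hmain
  apply Tendsto.congr' _ hmain
  filter_upwards [hev1, hev2] with ε hε1 hε2
  have hinv : ε⁻¹ ^ 2 * ε ^ 2 = 1 := by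
    field_simp
  rw [key2 ε (hcond ε hε1), mul_add]
  congr 1
  rw [← hAL, ← mul_assoc, hinv, one_mul]
end

section
/- For \lambda \in \mathbb{C} with |\lambda| < 1, let p_\lambda(z) = 1/(1 - \lambda z). Then the linear span of the family {p_\lambda : |\lambda| < 1} is \|\cdot\|_*-dense in the space of power series with radius of convergence greater than 1: for every such power series f and every \delta > 0 there exist finitely many \lambda_1, \dots, \lambda_k in the open unit disk and complex coefficients c_1, \dots, c_k such that \|f - \sum_{i=1}^k c_i p_{\lambda_i}\|_* \le \delta. -/
/-! Choose `n` so that the tail `∑_{k ≥ n} k² |a_k|` is at most `δ/2`. For a primitive `n`-th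
root of unity `ζ` and small `t > 0`, discrete Fourier inversion on the nodes `λ_j = t ζ^j` gives
weights `c_j` with `∑_j c_j λ_j^k = a_{k mod n} t^{n ⌊k/n⌋}`: the combination `∑_j c_j p_{λ_j}`
reproduces `a_0, …, a_{n-1}` exactly, and its higher coefficients are aliased copies of them damped
by `t^{k+1-n}`, which contribute `O(t)` to `‖·‖_*`. -/

open Finset

namespace IsPrimitiveRoot

variable {K : Type*} [Field K] {ζ : K} {n : ℕ}

theorem geom_sum_pow_div_pow (hζ : IsPrimitiveRoot ζ n) {r m : ℕ} (hr : r < n) (hm : m < n) :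
    ∑ j ∈ range n, (ζ ^ r / ζ ^ m) ^ j = if r = m then (n : K) else 0 := by
  have hζ0 : ζ ≠ 0 := hζ.ne_zero (by omega)
  split_ifs with h
  · simp [h, hζ0]
  · have hne : ζ ^ r / ζ ^ m ≠ 1 := fun h1 =>
      h (hζ.pow_inj hr hm ((div_eq_one_iff_eq (pow_ne_zero _ hζ0)).1 h1))
    rw [geom_sum_eq hne, div_pow, ← pow_mul, ← pow_mul, mul_comm r, mul_comm m, pow_mul, pow_mul,
      hζ.pow_eq_one]
    simp

theorem sum_fourier_weight_mul_pow [NeZero n] (hζ : IsPrimitiveRoot ζ n) {t : K} (ht : t ≠ 0)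
    (a : ℕ → K) (k : ℕ) :
    ∑ j : Fin n, ((n : K)⁻¹ * ∑ m ∈ range n, a m / (t * ζ ^ (j : ℕ)) ^ m) * (t * ζ ^ (j : ℕ)) ^ k
      = a (k % n) * t ^ (n * (k / n)) := by
  have hζk : ζ ^ k = ζ ^ (k % n) := by
    conv_lhs => rw [← Nat.div_add_mod k n, pow_add, pow_mul, hζ.pow_eq_one, one_pow, one_mul]
  have hterm (j m : ℕ) : a m / (t * ζ ^ j) ^ m * (t * ζ ^ j) ^ k
      = a m * t ^ k / t ^ m * (ζ ^ (k % n) / ζ ^ m) ^ j := by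
    rw [← hζk, mul_pow, mul_pow, div_pow, ← pow_mul, ← pow_mul, ← pow_mul, ← pow_mul,
      mul_comm j, mul_comm j]
    field_simp
  calc _ = ∑ m ∈ range n, (n : K)⁻¹ * (a m * t ^ k / t ^ m) *
          ∑ j ∈ range n, (ζ ^ (k % n) / ζ ^ m) ^ j := by
        rw [Fin.sum_univ_eq_sum_range (fun j => ((n : K)⁻¹ * ∑ m ∈ range n, a m / (t * ζ ^ j) ^ m)
          * (t * ζ ^ j) ^ k)]
        simp only [mul_sum, sum_mul, mul_assoc, hterm]
        exact sum_comm
    _ = (n : K)⁻¹ * (a (k % n) * t ^ k / t ^ (k % n)) * n := by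
        have hkn : k % n < n := Nat.mod_lt k (NeZero.pos n)
        rw [sum_eq_single_of_mem (k % n) (mem_range.2 hkn), hζ.geom_sum_pow_div_pow hkn hkn,
          if_pos rfl]
        intro m hm hmk
        rw [hζ.geom_sum_pow_div_pow hkn (mem_range.1 hm), if_neg (Ne.symm hmk), mul_zero]
    _ = a (k % n) * t ^ (n * (k / n)) := by
        have hn : (n : K) ≠ 0 := hζ.neZero'.out
        rw [show t ^ k = t ^ (n * (k / n)) * t ^ (k % n) by rw [← pow_add, Nat.div_add_mod]]
        field_simp

end IsPrimitiveRoot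

theorem summable_pow_mul_norm_of_summable_norm_mul_pow {E : Type*} [SeminormedAddCommGroup E]
    {a : ℕ → E} {r : ℝ} (p : ℕ) (hr : 1 < r) (ha : Summable fun k => ‖a k‖ * r ^ k) :
    Summable fun k : ℕ => (k : ℝ) ^ p * ‖a k‖ := by
  have hr0 : 0 < r := one_pos.trans hr
  have hq : ‖r⁻¹‖ < 1 := by
    rw [Real.norm_of_nonneg (inv_nonneg.2 hr0.le)]
    exact inv_lt_one_of_one_lt₀ hr
  obtain ⟨M, hM⟩ :=
    (summable_pow_mul_geometric_of_norm_lt_one p hq).tendsto_atTop_zero.bddAbove_range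
  refine Summable.of_nonneg_of_le (fun k => by positivity) (fun k => ?_) (ha.mul_left M)
  calc (k : ℝ) ^ p * ‖a k‖ = (k : ℝ) ^ p * r⁻¹ ^ k * (‖a k‖ * r ^ k) := by
        rw [mul_assoc, inv_pow, mul_comm ‖a k‖, inv_mul_cancel_left₀ (pow_ne_zero k hr0.ne')]
    _ ≤ M * (‖a k‖ * r ^ k) := by gcongr; exact hM ⟨k, rfl⟩

theorem summable_pow_add_mul_geometric_of_norm_lt_one {q : ℝ} (hq : ‖q‖ < 1) (p n : ℕ) :
    Summable fun i : ℕ => ((i + n : ℕ) : ℝ) ^ p * q ^ i := by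
  simp_rw [Nat.cast_add, add_pow, sum_mul]
  refine summable_sum fun j _ => ?_
  exact ((summable_pow_mul_geometric_of_norm_lt_one j hq).mul_left
    ((n : ℝ) ^ (p - j) * p.choose j)).congr fun i => by ring

theorem tsum_sq_mul_norm_sub_le {E : Type*} [SeminormedAddCommGroup E] {a b : ℕ → E} {n : ℕ}
    {ε q : ℝ} (ha : Summable fun k : ℕ => (k : ℝ) ^ 2 * ‖a k‖) (hq : ‖q‖ < 1)
    (hlow : ∀ k < n, b k = a k) (hhigh : ∀ i, ‖b (i + n)‖ ≤ ε * q ^ i) :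
    ∑' k : ℕ, (k : ℝ) ^ 2 * ‖a k - b k‖ ≤
      ∑' i, ((i + n : ℕ) : ℝ) ^ 2 * ‖a (i + n)‖ + ε * ∑' i, ((i + n : ℕ) : ℝ) ^ 2 * q ^ i := by
  set e : ℕ → ℝ := fun k : ℕ => (k : ℝ) ^ 2 * ‖a k - b k‖
  have hA : Summable fun i => ((i + n : ℕ) : ℝ) ^ 2 * ‖a (i + n)‖ := (summable_nat_add_iff n).2 ha
  have hQ := (summable_pow_add_mul_geometric_of_norm_lt_one hq 2 n).mul_left ε
  have hbound (i : ℕ) :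
      e (i + n) ≤ ((i + n : ℕ) : ℝ) ^ 2 * ‖a (i + n)‖ + ε * (((i + n : ℕ) : ℝ) ^ 2 * q ^ i) :=
    calc e (i + n) ≤ ((i + n : ℕ) : ℝ) ^ 2 * (‖a (i + n)‖ + ε * q ^ i) :=
          mul_le_mul_of_nonneg_left ((norm_sub_le _ _).trans (add_le_add_right (hhigh i) _))
            (sq_nonneg _)
      _ = _ := by ring
  have he : Summable fun i => e (i + n) :=
    Summable.of_nonneg_of_le (fun _ => by positivity) hbound (hA.add hQ)
  have hhead : ∑ k ∈ range n, e k = 0 :=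
    sum_eq_zero fun k hk => by simp [e, hlow k (mem_range.1 hk)]
  calc ∑' k, e k = ∑' i, e (i + n) := by
        rw [← ((summable_nat_add_iff n).1 he).sum_add_tsum_nat_add n, hhead, zero_add]
    _ ≤ _ := he.tsum_le_tsum hbound (hA.add hQ)
    _ = _ := by rw [hA.tsum_add hQ, tsum_mul_left]

theorem norm_mod_mul_pow_div_le {𝕜 : Type*} [NormedDivisionRing 𝕜] (a : ℕ → 𝕜) {n : ℕ}
    (hn : 0 < n) {t : 𝕜} {q : ℝ} (ht : ‖t‖ ≤ q) (hq : q ≤ 1) (i : ℕ) :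
    ‖a ((i + n) % n) * t ^ (n * ((i + n) / n))‖ ≤ (∑ m ∈ range n, ‖a m‖) * ‖t‖ * q ^ i := by
  have hexp : i + 1 ≤ n * ((i + n) / n) := by
    have := Nat.div_add_mod (i + n) n
    have := Nat.mod_lt (i + n) hn
    omega
  rw [norm_mul, norm_pow, mul_assoc]
  gcongr
  · exact single_le_sum (fun m _ => norm_nonneg (a m)) (mem_range.2 (Nat.mod_lt _ hn))
  · calc ‖t‖ ^ (n * ((i + n) / n)) ≤ ‖t‖ ^ (i + 1) :=
          pow_le_pow_of_le_one (norm_nonneg t) (ht.trans hq) hexp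
      _ = ‖t‖ * ‖t‖ ^ i := pow_succ' _ _
      _ ≤ ‖t‖ * q ^ i := by gcongr

open Filter Topology in
/-- The linear span of the geometric series `p_λ(z) = 1/(1-λz) = ∑ λ^k z^k`,
`|λ| < 1`, is `‖·‖_*`-dense in the space of power series with radius of convergence
greater than 1, where `‖∑ a_k z^k‖_* = ∑_{k≥1} k² |a_k|`. -/
theorem geometric_series_span_star_norm_dense (a : ℕ → ℂ)
    (hrad : ∃ r : ℝ, 1 < r ∧ Summable fun k => ‖a k‖ * r ^ k)
    (δ : ℝ) (hδ : 0 < δ) :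
    ∃ (k : ℕ) (lam : Fin k → ℂ) (c : Fin k → ℂ),
      (∀ i, ‖lam i‖ < 1) ∧
      (∑' m : ℕ, (m : ℝ) ^ 2 * ‖a m - ∑ i, c i * lam i ^ m‖) ≤ δ := by
  obtain ⟨r, hr, har⟩ := hrad
  have ha := summable_pow_mul_norm_of_summable_norm_mul_pow 2 hr har
  obtain ⟨n, htail, hn⟩ : ∃ n, ∑' i, ((i + n : ℕ) : ℝ) ^ 2 * ‖a (i + n)‖ ≤ δ / 2 ∧ 0 < n :=
    (((tendsto_sum_nat_add fun k : ℕ => (k : ℝ) ^ 2 * ‖a k‖).eventually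
      (ge_mem_nhds (half_pos hδ))).and (eventually_gt_atTop 0)).exists
  have : NeZero n := ⟨hn.ne'⟩
  set A := ∑ m ∈ range n, ‖a m‖
  set C := ∑' i : ℕ, ((i + n : ℕ) : ℝ) ^ 2 * (1 / 2 : ℝ) ^ i
  have hsmall : ∀ᶠ t in 𝓝[>] (0 : ℝ), A * t * C < δ / 2 ∧ t ≤ 1 / 2 := by
    refine nhdsWithin_le_nhds (Eventually.and ?_ (eventually_le_nhds (by norm_num)))
    exact (Continuous.tendsto' (by fun_prop) 0 0 (by simp)).eventually (gt_mem_nhds (half_pos hδ))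
  obtain ⟨t, ⟨htC, ht⟩, ht0⟩ := (hsmall.and self_mem_nhdsWithin).exists
  set ζ := Complex.exp (2 * Real.pi * Complex.I / n)
  have hζ : IsPrimitiveRoot ζ n := Complex.isPrimitiveRoot_exp n hn.ne'
  have htnorm : ‖(t : ℂ)‖ = t := by rw [Complex.norm_real, Real.norm_of_nonneg ht0.le]
  refine ⟨n, fun j => t * ζ ^ (j : ℕ),
    fun j => (n : ℂ)⁻¹ * ∑ m ∈ range n, a m / (t * ζ ^ (j : ℕ)) ^ m, fun j => ?_, ?_⟩
  · rw [norm_mul, norm_pow, hζ.norm'_eq_one hn.ne', one_pow, mul_one, htnorm]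
    linarith
  simp_rw [hζ.sum_fourier_weight_mul_pow (t := (t : ℂ)) (by exact_mod_cast ht0.ne') a]
  calc _ ≤ _ := tsum_sq_mul_norm_sub_le ha (q := 1 / 2) (by norm_num)
        (fun k hk => by simp [Nat.mod_eq_of_lt hk, Nat.div_eq_of_lt hk])
        (norm_mod_mul_pow_div_le a hn (by rw [htnorm]; exact ht) (by norm_num))
    _ ≤ δ := by rw [htnorm]; linarith
end

section
/- Let M be a row-stochastic real n\times n matrix with nonnegative entries and let B be a real n\times n matrix with |B_{v,w}| \le c_1 M_{v,w} for all v, w, where c_1 > 0 is a constant. Then for every integer j \ge 2 and every index v, \sum_{w} \sum_{j_1 + j_2 + 2 = j,\, j_1, j_2 \ge 0} |(B M^{j_1})_{v,w}| \cdot |(B M^{j_2})_{w,v}| \le c_1^2 \, j \, (M^j)_{v,v}. -/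
/-!
Entrywise, `|B| ≤ c₁ M` and `M ≥ 0` give `|B M^k| ≤ c₁ M^(k+1)`, so each of the at most
`j` terms `∑_w |(B M^{j₁})_{v,w}| |(B M^{j₂})_{w,v}|` is bounded by the `(v, v)` entry of
`c₁ M^(j₁+1) · c₁ M^(j₂+1) = c₁² M^j`.
-/

open Matrix Finset

namespace Matrix

variable {l m n R : Type*} [Fintype m] [CommRing R] [LinearOrder R] [IsStrictOrderedRing R]

theorem abs_mul_apply_le_of_abs_le {A B : Matrix l m R} {N : Matrix m n R}
    (hAB : ∀ i j, |A i j| ≤ B i j) (hN : ∀ i j, 0 ≤ N i j) (i : l) (k : n) :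
    |(A * N) i k| ≤ (B * N) i k :=
  calc |∑ j, A i j * N j k| ≤ ∑ j, |A i j * N j k| := abs_sum_le_sum_abs _ _
    _ ≤ ∑ j, B i j * N j k := sum_le_sum fun j _ => by
      rw [abs_mul, abs_of_nonneg (hN j k)]
      exact mul_le_mul_of_nonneg_right (hAB i j) (hN j k)

theorem sum_abs_mul_abs_le_mul_apply {X P : Matrix l m R} {Y Q : Matrix m n R}
    (hX : ∀ i j, |X i j| ≤ P i j) (hY : ∀ i j, |Y i j| ≤ Q i j) (i : l) (k : n) :
    ∑ j, |X i j| * |Y j k| ≤ (P * Q) i k :=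
  sum_le_sum fun j _ => mul_le_mul (hX i j) (hY j k) (abs_nonneg _) ((abs_nonneg _).trans (hX i j))

theorem abs_mul_pow_apply_le [DecidableEq m] {M B : Matrix m m R} {c : R}
    (hM : ∀ i j, 0 ≤ M i j) (hB : ∀ i j, |B i j| ≤ c * M i j) (k : ℕ) (i j : m) :
    |(B * M ^ k) i j| ≤ (c • M ^ (k + 1)) i j := by
  rw [pow_succ', ← smul_mul_assoc]
  exact abs_mul_apply_le_of_abs_le (B := c • M) (by simpa using hB) (pow_apply_nonneg hM k) i j

end Matrix

theorem card_filter_add_add_two_eq_le (j : ℕ) :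
    #((range j ×ˢ range j).filter (fun p => p.1 + p.2 + 2 = j)) ≤ j :=
  (card_le_card_of_injOn Prod.fst (fun p hp => by simp at hp ⊢; omega)
    (fun p hp q hq h => by simp at hp hq; ext <;> omega)).trans_eq (card_range j)

theorem Y_sum_bound_general {n : ℕ} (M B : Matrix (Fin n) (Fin n) ℝ) (c₁ : ℝ)
    (hMnonneg : ∀ i j, 0 ≤ M i j)
    (hB : ∀ v w, |B v w| ≤ c₁ * M v w)
    (j : ℕ) (v : Fin n) :
    ∑ w, ∑ p ∈ (Finset.range j ×ˢ Finset.range j).filter (fun p => p.1 + p.2 + 2 = j),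
        |(B * M ^ p.1) v w| * |(B * M ^ p.2) w v| ≤
      c₁ ^ 2 * j * (M ^ j) v v := by
  set S := (range j ×ˢ range j).filter (fun p => p.1 + p.2 + 2 = j)
  have hterm : ∀ p ∈ S,
      ∑ w, |(B * M ^ p.1) v w| * |(B * M ^ p.2) w v| ≤ c₁ ^ 2 * (M ^ j) v v := by
    intro p hp
    have hj : p.1 + 1 + (p.2 + 1) = j := by simp [S] at hp; omega
    calc _ ≤ (c₁ • M ^ (p.1 + 1) * c₁ • M ^ (p.2 + 1)) v v :=
          sum_abs_mul_abs_le_mul_apply (abs_mul_pow_apply_le hMnonneg hB _)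
            (abs_mul_pow_apply_le hMnonneg hB _) v v
      _ = c₁ ^ 2 * (M ^ j) v v := by
          rw [smul_mul_smul, ← pow_add, hj, sq, Matrix.smul_apply, smul_eq_mul]
  have hnonneg : 0 ≤ c₁ ^ 2 * (M ^ j) v v :=
    mul_nonneg (sq_nonneg c₁) (pow_apply_nonneg hMnonneg j v v)
  rw [sum_comm]
  calc _ ≤ #S • (c₁ ^ 2 * (M ^ j) v v) := sum_le_card_nsmul _ _ _ hterm
    _ ≤ j • (c₁ ^ 2 * (M ^ j) v v) :=
        nsmul_le_nsmul_left hnonneg (card_filter_add_add_two_eq_le j)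
    _ = c₁ ^ 2 * j * (M ^ j) v v := by rw [nsmul_eq_mul]; ring

/-- For a row-stochastic matrix `M` with nonnegative entries and a matrix
`B` with `|B_{v,w}| ≤ c₁ M_{v,w}`, one has for every `j ≥ 2` and index `v`:
`∑_w ∑_{j₁+j₂+2=j} |(B M^{j₁})_{v,w}| |(B M^{j₂})_{w,v}| ≤ c₁² j (M^j)_{v,v}`. -/
theorem Y_sum_bound {n : ℕ} (M B : Matrix (Fin n) (Fin n) ℝ) (c₁ : ℝ) (hc₁ : 0 < c₁)
    (hMnonneg : ∀ i j, 0 ≤ M i j) (hMrow : ∀ i, ∑ j, M i j = 1)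
    (hB : ∀ v w, |B v w| ≤ c₁ * M v w)
    (j : ℕ) (hj : 2 ≤ j) (v : Fin n) :
    ∑ w, ∑ p ∈ (Finset.range j ×ˢ Finset.range j).filter (fun p => p.1 + p.2 + 2 = j),
        |(B * M ^ p.1) v w| * |(B * M ^ p.2) w v| ≤
      c₁ ^ 2 * j * (M ^ j) v v :=
  Y_sum_bound_general M B c₁ hMnonneg hB j v
end

section
/- Let G be a finite graph with simple random walk transition matrix M, let o be a fixed vertex, and let B be a random real matrix indexed by the vertices of G such that |B_{u,v}| \le c_1 M_{u,v} almost surely and the rows (B_{u,\cdot})_{u} are independent random vectors. For |\lambda| < 1 let \mathcal{G}_\lambda = (I - \lambda M)^{-1}. Define Y_j(G,v,w) = \sum_{j_1+j_2+2=j,\, j_1,j_2\ge 0} (BM^{j_1})_{v,w}(BM^{j_2})_{w,v} and \alpha_{ij} = E[\sum_{v \ne o} Y_i(G,o,v) Y_j(G,o,v)]. Then for all complex \lambda, \mu with |\lambda| < 1 and |\mu| < 1, \sum_{i,j \ge 2} \alpha_{ij} \lambda^i \mu^j = \lambda^2 \mu^2 \sum_{v \ne o} E[ (B\mathcal{G}_\lambda)_{o,v}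 (B\mathcal{G}_\mu)_{o,v} ] \cdot E[ (B\mathcal{G}_\lambda)_{v,o} (B\mathcal{G}_\mu)_{v,o} ], where the double series on the left converges absolutely. -/
open Matrix Finset MeasureTheory ProbabilityTheory

/-!
Expanding the Green functions as Neumann series, `(B𝒢_z)_{uv} = ∑_k z^k (BM^k)_{uv}`, the
generating function `∑_j Y_j(o,v) z^j` is the Cauchy product `z² (B𝒢_z)_{ov} (B𝒢_z)_{vo}`, so
`∑_{i,j} Y_i Y_j λ^i μ^j` factorizes pointwise in `ω`. Since `M` is substochastic and
`|B| ≤ c₁ M`, every coefficient `(BM^k)_{uv}` is bounded by `|c₁|`, so `|Y_j| ≤ j c₁²` and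
dominated convergence exchanges expectation and summation. Finally `(B𝒢_z)_{ov}` depends only on
row `o` of `B` and `(B𝒢_z)_{vo}` only on row `v`, so for `v ≠ o` the expectation of the product
splits by independence of the rows.
-/

namespace Finset

def shiftedAntidiagonal (j : ℕ) : Finset (ℕ × ℕ) :=
  (range j ×ˢ range j).filter fun p => p.1 + p.2 + 2 = j

theorem mem_shiftedAntidiagonal {j : ℕ} {p : ℕ × ℕ} :
    p ∈ shiftedAntidiagonal j ↔ p.1 + p.2 + 2 = j := by
  simp only [shiftedAntidiagonal, mem_filter, mem_product, mem_range]
  omega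

@[simp]
theorem shiftedAntidiagonal_add_two (n : ℕ) : shiftedAntidiagonal (n + 2) = antidiagonal n := by
  ext p
  rw [mem_shiftedAntidiagonal, HasAntidiagonal.mem_antidiagonal]
  omega

theorem shiftedAntidiagonal_eq_empty {j : ℕ} (hj : j < 2) : shiftedAntidiagonal j = ∅ := by
  ext p
  simp only [mem_shiftedAntidiagonal, notMem_empty, iff_false]
  omega

theorem card_shiftedAntidiagonal_le (j : ℕ) : #(shiftedAntidiagonal j) ≤ j := by
  obtain hj | ⟨n, rfl⟩ : j < 2 ∨ ∃ n, j = n + 2 := by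
    rcases Nat.lt_or_ge j 2 with h | h
    · exact .inl h
    · exact .inr ⟨j - 2, by omega⟩
  · simp [shiftedAntidiagonal_eq_empty hj]
  · simp

end Finset

section ShiftedCauchyProduct

variable {R : Type*}

theorem summable_norm_sum_shiftedAntidiagonal [NormedRing R] {a b : ℕ → R}
    (ha : Summable fun k => ‖a k‖) (hb : Summable fun k => ‖b k‖) :
    Summable fun j => ‖∑ p ∈ shiftedAntidiagonal j, a p.1 * b p.2‖ := by
  rw [← summable_nat_add_iff 2]
  simpa using summable_norm_sum_mul_antidiagonal_of_summable_norm ha hb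

theorem hasSum_sum_shiftedAntidiagonal [NormedRing R] [CompleteSpace R] {a b : ℕ → R}
    (ha : Summable fun k => ‖a k‖) (hb : Summable fun k => ‖b k‖) :
    HasSum (fun j => ∑ p ∈ shiftedAntidiagonal j, a p.1 * b p.2) ((∑' k, a k) * ∑' k, b k) := by
  rw [← hasSum_nat_add_iff' 2, tsum_mul_tsum_eq_tsum_sum_antidiagonal_of_summable_norm ha hb]
  simpa [Finset.sum_range_succ, shiftedAntidiagonal_eq_empty] using
    (summable_norm_sum_mul_antidiagonal_of_summable_norm ha hb).of_norm.hasSum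

theorem sum_shiftedAntidiagonal_mul_pow [CommRing R] (x y : ℕ → R) (z : R) (j : ℕ) :
    (∑ p ∈ shiftedAntidiagonal j, x p.1 * y p.2) * z ^ j =
      z ^ 2 * ∑ p ∈ shiftedAntidiagonal j, (z ^ p.1 * x p.1) * (z ^ p.2 * y p.2) := by
  rw [Finset.sum_mul, Finset.mul_sum]
  refine Finset.sum_congr rfl fun p hp => ?_
  rw [← mem_shiftedAntidiagonal.mp hp]
  ring

theorem norm_sum_shiftedAntidiagonal_le [SeminormedRing R] {x y : ℕ → R} {K : ℝ}
    (hx : ∀ k, ‖x k‖ ≤ K) (hy : ∀ k, ‖y k‖ ≤ K) (j : ℕ) :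
    ‖∑ p ∈ shiftedAntidiagonal j, x p.1 * y p.2‖ ≤ j * K ^ 2 := by
  have hK : 0 ≤ K := (norm_nonneg _).trans (hx 0)
  calc ‖∑ p ∈ shiftedAntidiagonal j, x p.1 * y p.2‖
      ≤ ∑ p ∈ shiftedAntidiagonal j, K ^ 2 :=
        (norm_sum_le _ _).trans <| Finset.sum_le_sum fun p _ =>
          (norm_mul_le _ _).trans (by rw [sq]; gcongr; exacts [hx _, hy _])
    _ ≤ j * K ^ 2 := by
        rw [sum_const, nsmul_eq_mul]
        gcongr
        exact_mod_cast card_shiftedAntidiagonal_le j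

variable [NormedCommRing R] {x y : ℕ → R} {z : R}

theorem summable_norm_sum_shiftedAntidiagonal_mul_pow (hx : Summable fun k => ‖z ^ k * x k‖)
    (hy : Summable fun k => ‖z ^ k * y k‖) :
    Summable fun j => ‖(∑ p ∈ shiftedAntidiagonal j, x p.1 * y p.2) * z ^ j‖ := by
  simp_rw [sum_shiftedAntidiagonal_mul_pow]
  exact .of_nonneg_of_le (fun _ => norm_nonneg _) (fun _ => norm_mul_le _ _)
    ((summable_norm_sum_shiftedAntidiagonal hx hy).mul_left _)

theorem hasSum_sum_shiftedAntidiagonal_mul_pow [CompleteSpace R] {X Y : R}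
    (hx : HasSum (fun k => z ^ k * x k) X) (hy : HasSum (fun k => z ^ k * y k) Y)
    (hx' : Summable fun k => ‖z ^ k * x k‖) (hy' : Summable fun k => ‖z ^ k * y k‖) :
    HasSum (fun j => (∑ p ∈ shiftedAntidiagonal j, x p.1 * y p.2) * z ^ j) (z ^ 2 * (X * Y)) := by
  simp_rw [sum_shiftedAntidiagonal_mul_pow, ← hx.tsum_eq, ← hy.tsum_eq]
  exact (hasSum_sum_shiftedAntidiagonal hx' hy').mul_left _

end ShiftedCauchyProduct

theorem summable_mul_norm_pow_mul_mul_norm_pow {𝕜 : Type*} [NormedField 𝕜] {z w : 𝕜}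
    (hz : ‖z‖ < 1) (hw : ‖w‖ < 1) :
    Summable fun p : ℕ × ℕ => ((p.1 : ℝ) * ‖z‖ ^ p.1) * (p.2 * ‖w‖ ^ p.2) := by
  have hgeom : ∀ {z : 𝕜}, ‖z‖ < 1 → Summable fun k : ℕ => (k : ℝ) * ‖z‖ ^ k := fun hz => by
    simpa using summable_pow_mul_geometric_of_norm_lt_one 1 (r := ‖_‖) (by simpa using hz)
  exact (hgeom hz).mul_of_nonneg (hgeom hw) (fun _ => by positivity) (fun _ => by positivity)

theorem SimpleGraph.sum_norm_le_one_of_randomWalk {V : Type*} [Fintype V] (G : SimpleGraph V)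
    [DecidableRel G.Adj] {M : Matrix V V ℝ}
    (hM : ∀ u v : V, M u v = if G.Adj u v then (1 : ℝ) / (G.degree u) else 0) (u : V) :
    ∑ v, ‖M u v‖ ≤ 1 := by
  simp only [hM, apply_ite, norm_zero, Finset.sum_ite, sum_const_zero, add_zero, sum_const,
    nsmul_eq_mul, ← SimpleGraph.neighborFinset_eq_filter, SimpleGraph.card_neighborFinset_eq_degree]
  rcases Nat.eq_zero_or_pos (G.degree u) with h | h
  · simp [h]
  · rw [norm_div, norm_one, RCLike.norm_natCast, mul_one_div_cancel (by positivity)]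

namespace Matrix

section LinftyOpNorm

attribute [local instance] Matrix.linftyOpSeminormedAddCommGroup Matrix.linftyOpNormedRing
  Matrix.linftyOpNormedAlgebra

theorem norm_apply_le_linfty_opNorm {m n α : Type*} [Fintype m] [Fintype n]
    [SeminormedAddCommGroup α] (A : Matrix m n α) (i : m) (j : n) : ‖A i j‖ ≤ ‖A‖ := by
  rw [linfty_opNorm_def]
  exact_mod_cast (Finset.single_le_sum (fun _ _ => zero_le) (mem_univ j)).trans
    (Finset.le_sup (f := fun i => ∑ j, ‖A i j‖₊) (mem_univ i))

theorem linfty_opNorm_le_of_sum_norm_le {m n α : Type*} [Fintype m] [Fintype n]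
    [SeminormedAddCommGroup α] {A : Matrix m n α} {r : ℝ} (hr : 0 ≤ r)
    (h : ∀ i, ∑ j, ‖A i j‖ ≤ r) : ‖A‖ ≤ r := by
  rw [linfty_opNorm_def]
  lift r to NNReal using hr
  exact_mod_cast Finset.sup_le fun i _ => by
    rw [← NNReal.coe_le_coe, NNReal.coe_sum]
    exact h i

variable {n : Type*} [Fintype n] [DecidableEq n]

theorem norm_pow_apply_le_one {α : Type*} [NormedRing α] [NormOneClass α] {N : Matrix n n α}
    (hN : ∀ i, ∑ j, ‖N i j‖ ≤ 1) (k : ℕ) (i j : n) : ‖(N ^ k) i j‖ ≤ 1 := by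
  have : Nonempty n := ⟨i⟩
  calc ‖(N ^ k) i j‖ ≤ ‖N‖ ^ k := (norm_apply_le_linfty_opNorm _ i j).trans (norm_pow_le _ _)
    _ ≤ 1 := pow_le_one₀ (norm_nonneg _) (linfty_opNorm_le_of_sum_norm_le zero_le_one hN)

theorem pow_mul_mul_pow_apply {R : Type*} [CommSemiring R] (A N : Matrix n n R) (z : R) (k : ℕ)
    (u v : n) : z ^ k * (A * N ^ k) u v = (A * (z • N) ^ k) u v := by
  simp [smul_pow]

variable {𝕜 : Type*} [RCLike 𝕜] {N : Matrix n n 𝕜} {z : 𝕜}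

theorem norm_smul_lt_one (hN : ∀ i, ∑ j, ‖N i j‖ ≤ 1) (hz : ‖z‖ < 1) : ‖z • N‖ < 1 :=
  (norm_smul_le z N).trans_lt <|
    mul_lt_one_of_nonneg_of_lt_one_left (norm_nonneg _) hz
      (linfty_opNorm_le_of_sum_norm_le zero_le_one hN)

theorem hasSum_pow_mul_mul_pow_apply (A : Matrix n n 𝕜) (hN : ∀ i, ∑ j, ‖N i j‖ ≤ 1)
    (hz : ‖z‖ < 1) (u v : n) :
    HasSum (fun k => z ^ k * (A * N ^ k) u v) ((A * (1 - z • N)⁻¹) u v) := by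
  have h := (hasSum_geom_series_inverse (z • N) (norm_smul_lt_one hN hz)).mul_left A
  rw [← nonsing_inv_eq_ringInverse] at h
  simpa only [pow_mul_mul_pow_apply] using Pi.hasSum.mp (Pi.hasSum.mp h u) v

theorem summable_norm_pow_mul_mul_pow_apply (A : Matrix n n 𝕜) (hN : ∀ i, ∑ j, ‖N i j‖ ≤ 1)
    (hz : ‖z‖ < 1) (u v : n) : Summable fun k => ‖z ^ k * (A * N ^ k) u v‖ := by
  refine .of_nonneg_of_le (fun _ => norm_nonneg _) (fun k => ?_)
    ((summable_norm_geometric_of_norm_lt_one (norm_smul_lt_one hN hz)).mul_left ‖A‖)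
  rw [pow_mul_mul_pow_apply]
  exact (norm_apply_le_linfty_opNorm _ u v).trans (norm_mul_le _ _)

theorem norm_inv_one_sub_smul_apply_le (hN : ∀ i, ∑ j, ‖N i j‖ ≤ 1) (hz : ‖z‖ < 1) (u v : n) :
    ‖(1 - z • N)⁻¹ u v‖ ≤ (1 - ‖z‖)⁻¹ := by
  have h := hasSum_pow_mul_mul_pow_apply 1 hN hz u v
  simp only [Matrix.one_mul] at h
  rw [← h.tsum_eq]
  refine tsum_of_norm_bounded (hasSum_geometric_of_lt_one (norm_nonneg z) hz) fun k => ?_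
  rw [norm_mul, norm_pow]
  exact mul_le_of_le_one_right (by positivity) (norm_pow_apply_le_one hN k u v)

end LinftyOpNorm

theorem norm_mul_apply_le {m n p α : Type*} [Fintype n] [SeminormedRing α]
    {A : Matrix m n α} {N : Matrix n p α} {r C : ℝ} (hA : ∀ i, ∑ j, ‖A i j‖ ≤ r)
    (hN : ∀ i j, ‖N i j‖ ≤ C) (hC : 0 ≤ C) (u : m) (v : p) : ‖(A * N) u v‖ ≤ r * C :=
  calc ‖(A * N) u v‖ ≤ ∑ w, ‖A u w‖ * C :=
        (norm_sum_le _ _).trans <| Finset.sum_le_sum fun w _ =>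
          (norm_mul_le _ _).trans (by gcongr; exact hN w v)
    _ ≤ r * C := by rw [← Finset.sum_mul]; exact mul_le_mul_of_nonneg_right (hA u) hC

theorem sum_norm_map_ofReal {n : Type*} [Fintype n] (N : Matrix n n ℝ) (i : n) :
    ∑ j, ‖N.map Complex.ofReal i j‖ = ∑ j, ‖N i j‖ := by
  simp

variable {n : Type*} [Fintype n] [DecidableEq n]

theorem ofReal_mul_pow_apply (A N : Matrix n n ℝ) (k : ℕ) (u v : n) :
    (((A * N ^ k) u v : ℝ) : ℂ) = (A.map Complex.ofReal * N.map Complex.ofReal ^ k) u v := by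
  change _ = (A.map Complex.ofRealHom * N.map Complex.ofRealHom ^ k) u v
  rw [← Matrix.map_pow, ← Matrix.map_mul]
  rfl

/-- The paper's `Y_j(G,u,v)` for `B = A`, `M = N`. -/
def loopCoeff (A N : Matrix n n ℝ) (j : ℕ) (u v : n) : ℝ :=
  ∑ p ∈ shiftedAntidiagonal j, (A * N ^ p.1) u v * (A * N ^ p.2) v u

/-- The paper's `B𝒢_z` for `B = A`, `M = N`. -/
noncomputable def greenMul (A N : Matrix n n ℝ) (z : ℂ) : Matrix n n ℂ :=
  A.map Complex.ofReal * (1 - z • N.map Complex.ofReal)⁻¹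

variable {A N : Matrix n n ℝ} {z w : ℂ}

theorem ofReal_loopCoeff (A N : Matrix n n ℝ) (u v : n) (j : ℕ) :
    (loopCoeff A N j u v : ℂ) =
      ∑ p ∈ shiftedAntidiagonal j, (A.map Complex.ofReal * N.map Complex.ofReal ^ p.1) u v *
        (A.map Complex.ofReal * N.map Complex.ofReal ^ p.2) v u := by
  push_cast [loopCoeff, ofReal_mul_pow_apply]
  rfl

theorem summable_norm_loopCoeff_mul_pow (A : Matrix n n ℝ) (hN : ∀ i, ∑ j, ‖N i j‖ ≤ 1)
    (hz : ‖z‖ < 1) (u v : n) : Summable fun j => ‖(loopCoeff A N j u v : ℂ) * z ^ j‖ := by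
  have hNc : ∀ i, ∑ j, ‖N.map Complex.ofReal i j‖ ≤ 1 := by simpa only [sum_norm_map_ofReal]
  simp only [ofReal_loopCoeff]
  exact summable_norm_sum_shiftedAntidiagonal_mul_pow
    (x := fun k => (A.map Complex.ofReal * N.map Complex.ofReal ^ k) u v)
    (y := fun k => (A.map Complex.ofReal * N.map Complex.ofReal ^ k) v u)
    (summable_norm_pow_mul_mul_pow_apply _ hNc hz u v)
    (summable_norm_pow_mul_mul_pow_apply _ hNc hz v u)

theorem hasSum_loopCoeff_mul_pow (A : Matrix n n ℝ) (hN : ∀ i, ∑ j, ‖N i j‖ ≤ 1)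
    (hz : ‖z‖ < 1) (u v : n) :
    HasSum (fun j => (loopCoeff A N j u v : ℂ) * z ^ j)
      (z ^ 2 * (greenMul A N z u v * greenMul A N z v u)) := by
  have hNc : ∀ i, ∑ j, ‖N.map Complex.ofReal i j‖ ≤ 1 := by simpa only [sum_norm_map_ofReal]
  simp only [ofReal_loopCoeff]
  exact hasSum_sum_shiftedAntidiagonal_mul_pow
    (x := fun k => (A.map Complex.ofReal * N.map Complex.ofReal ^ k) u v)
    (y := fun k => (A.map Complex.ofReal * N.map Complex.ofReal ^ k) v u)
    (hasSum_pow_mul_mul_pow_apply _ hNc hz u v) (hasSum_pow_mul_mul_pow_apply _ hNc hz v u)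
    (summable_norm_pow_mul_mul_pow_apply _ hNc hz u v)
    (summable_norm_pow_mul_mul_pow_apply _ hNc hz v u)

theorem hasSum_loopCoeff_mul_loopCoeff (hN : ∀ i, ∑ j, ‖N i j‖ ≤ 1) (hz : ‖z‖ < 1)
    (hw : ‖w‖ < 1) (u v : n) :
    HasSum (fun p : ℕ × ℕ => ((loopCoeff A N p.1 u v * loopCoeff A N p.2 u v : ℝ) : ℂ) *
        z ^ p.1 * w ^ p.2)
      (z ^ 2 * w ^ 2 * ((greenMul A N z u v * greenMul A N w u v) *
        (greenMul A N z v u * greenMul A N w v u))) := by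
  have hsum := summable_mul_of_summable_norm (summable_norm_loopCoeff_mul_pow A hN hz u v)
    (summable_norm_loopCoeff_mul_pow A hN hw u v)
  have h := (hasSum_loopCoeff_mul_pow A hN hz u v).mul
    (hasSum_loopCoeff_mul_pow A hN hw u v) hsum
  rw [show z ^ 2 * w ^ 2 * ((greenMul A N z u v * greenMul A N w u v) *
      (greenMul A N z v u * greenMul A N w v u)) =
      z ^ 2 * (greenMul A N z u v * greenMul A N z v u) *
        (w ^ 2 * (greenMul A N w u v * greenMul A N w v u)) by ring]
  refine h.congr_fun fun p => ?_
  push_cast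
  ring

theorem norm_loopCoeff_le {K : ℝ} (hA : ∀ i, ∑ j, ‖A i j‖ ≤ K) (hN : ∀ i, ∑ j, ‖N i j‖ ≤ 1)
    (j : ℕ) (u v : n) : ‖loopCoeff A N j u v‖ ≤ j * K ^ 2 := by
  have hK : ∀ k u v, ‖(A * N ^ k) u v‖ ≤ K := fun k u v => by
    simpa using norm_mul_apply_le hA (norm_pow_apply_le_one hN k) zero_le_one u v
  exact norm_sum_shiftedAntidiagonal_le (hK · u v) (hK · v u) j

theorem norm_sum_loopCoeff_mul_loopCoeff_le {K : ℝ} (hA : ∀ i, ∑ j, ‖A i j‖ ≤ K)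
    (hN : ∀ i, ∑ j, ‖N i j‖ ≤ 1) (s : Finset n) (o : n) (i j : ℕ) :
    ‖∑ v ∈ s, loopCoeff A N i o v * loopCoeff A N j o v‖ ≤ #s * ((i * K ^ 2) * (j * K ^ 2)) := by
  refine (norm_sum_le _ _).trans ?_
  rw [← nsmul_eq_mul]
  exact sum_le_card_nsmul _ _ _ fun v _ => (norm_mul_le _ _).trans <|
    mul_le_mul (norm_loopCoeff_le hA hN i o v) (norm_loopCoeff_le hA hN j o v) (norm_nonneg _)
      (by positivity)

theorem norm_greenMul_apply_le {K : ℝ} (hA : ∀ i, ∑ j, ‖A i j‖ ≤ K)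
    (hN : ∀ i, ∑ j, ‖N i j‖ ≤ 1) (hz : ‖z‖ < 1) (u v : n) :
    ‖greenMul A N z u v‖ ≤ K * (1 - ‖z‖)⁻¹ :=
  norm_mul_apply_le (by simpa only [sum_norm_map_ofReal] using hA)
    (norm_inv_one_sub_smul_apply_le (by simpa only [sum_norm_map_ofReal] using hN) hz)
    (inv_nonneg.mpr (sub_nonneg.mpr hz.le)) u v

section RandomMatrix

variable {Ω : Type*} [MeasurableSpace Ω] {μ : Measure Ω} {B : Ω → Matrix n n ℝ} {K : ℝ}

theorem measurable_loopCoeff (hB : ∀ u v, Measurable fun ω => B ω u v) (N : Matrix n n ℝ)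
    (j : ℕ) (u v : n) : Measurable fun ω => loopCoeff (B ω) N j u v := by
  simp only [loopCoeff, mul_apply]
  fun_prop

theorem measurable_greenMul_apply (hB : ∀ u v, Measurable fun ω => B ω u v) (N : Matrix n n ℝ)
    (z : ℂ) (u v : n) : Measurable fun ω => greenMul (B ω) N z u v := by
  simp only [greenMul, mul_apply, map_apply]
  fun_prop

theorem integrable_greenMul_mul [IsFiniteMeasure μ] (hB : ∀ u v, Measurable fun ω => B ω u v)
    (hN : ∀ i, ∑ j, ‖N i j‖ ≤ 1) (hBrow : ∀ᵐ ω ∂μ, ∀ i, ∑ j, ‖B ω i j‖ ≤ K) (hz : ‖z‖ < 1)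
    (hw : ‖w‖ < 1) (u v : n) :
    Integrable (fun ω => (greenMul (B ω) N z u v * greenMul (B ω) N w u v) *
      (greenMul (B ω) N z v u * greenMul (B ω) N w v u)) μ := by
  have hg := measurable_greenMul_apply hB N
  refine Integrable.of_bound (((hg z u v).mul (hg w u v)).mul
      ((hg z v u).mul (hg w v u))).aestronglyMeasurable
    ((K * (1 - ‖z‖)⁻¹) * (K * (1 - ‖w‖)⁻¹) * ((K * (1 - ‖z‖)⁻¹) * (K * (1 - ‖w‖)⁻¹))) ?_
  filter_upwards [hBrow] with ω hω
  have hprod : ∀ u v, ‖greenMul (B ω) N z u v‖ * ‖greenMul (B ω) N w u v‖ ≤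
      (K * (1 - ‖z‖)⁻¹) * (K * (1 - ‖w‖)⁻¹) := fun u v =>
    mul_le_mul (norm_greenMul_apply_le hω hN hz u v) (norm_greenMul_apply_le hω hN hw u v)
      (norm_nonneg _) ((norm_nonneg _).trans (norm_greenMul_apply_le hω hN hz u v))
  rw [norm_mul, norm_mul, norm_mul]
  exact mul_le_mul (hprod u v) (hprod v u) (by positivity)
    ((by positivity : (0 : ℝ) ≤ _).trans (hprod u v))

theorem hasSum_integral_sum_loopCoeff_mul_loopCoeff [IsFiniteMeasure μ]
    (hB : ∀ u v, Measurable fun ω => B ω u v) (hN : ∀ i, ∑ j, ‖N i j‖ ≤ 1)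
    (hBrow : ∀ᵐ ω ∂μ, ∀ i, ∑ j, ‖B ω i j‖ ≤ K) (s : Finset n) (o : n) (hz : ‖z‖ < 1)
    (hw : ‖w‖ < 1) :
    HasSum (fun p : ℕ × ℕ =>
        ((∫ ω, ∑ v ∈ s, loopCoeff (B ω) N p.1 o v * loopCoeff (B ω) N p.2 o v ∂μ : ℝ) : ℂ) *
          z ^ p.1 * w ^ p.2)
      (z ^ 2 * w ^ 2 * ∑ v ∈ s, ∫ ω, (greenMul (B ω) N z o v * greenMul (B ω) N w o v) *
        (greenMul (B ω) N z v o * greenMul (B ω) N w v o) ∂μ) := by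
  set F : ℕ × ℕ → Ω → ℂ := fun p ω =>
    ((∑ v ∈ s, loopCoeff (B ω) N p.1 o v * loopCoeff (B ω) N p.2 o v : ℝ) : ℂ) *
      z ^ p.1 * w ^ p.2
  set bound : ℕ × ℕ → ℝ := fun p =>
    #s * ((p.1 * K ^ 2) * (p.2 * K ^ 2)) * ‖z‖ ^ p.1 * ‖w‖ ^ p.2
  have hF_meas : ∀ p, AEStronglyMeasurable (F p) μ := fun p =>
    ((Complex.measurable_ofReal.comp (Finset.measurable_sum _ fun v _ =>
      (measurable_loopCoeff hB N _ o v).mul (measurable_loopCoeff hB N _ o v))).mul_const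
        _ |>.mul_const _).aestronglyMeasurable
  have hF_bound : ∀ p, ∀ᵐ ω ∂μ, ‖F p ω‖ ≤ bound p := fun p => by
    filter_upwards [hBrow] with ω hω
    simp only [F, bound, norm_mul, norm_pow, Complex.norm_real]
    gcongr
    exact norm_sum_loopCoeff_mul_loopCoeff_le hω hN s o p.1 p.2
  have hbound : Summable bound :=
    ((summable_mul_norm_pow_mul_mul_norm_pow hz hw).mul_left (#s * (K ^ 2 * K ^ 2))).congr
      fun p => by simp only [bound]; ring
  have hlim : ∀ ω, HasSum (F · ω) (z ^ 2 * w ^ 2 * ∑ v ∈ s,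
      (greenMul (B ω) N z o v * greenMul (B ω) N w o v) *
        (greenMul (B ω) N z v o * greenMul (B ω) N w v o)) := fun ω => by
    rw [Finset.mul_sum]
    refine (hasSum_sum fun v _ => hasSum_loopCoeff_mul_loopCoeff hN hz hw o v).congr_fun
      fun p => ?_
    simp only [F]
    push_cast
    rw [Finset.sum_mul, Finset.sum_mul]
  have h := hasSum_integral_of_dominated_convergence (fun p _ => bound p) hF_meas hF_bound
    (ae_of_all _ fun _ => hbound) (integrable_const _) (ae_of_all _ hlim)
  simp only [F, integral_mul_const, integral_complex_ofReal] at h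
  rwa [integral_const_mul,
    integral_finsetSum _ fun v _ => integrable_greenMul_mul hB hN hBrow hz hw o v] at h

theorem integral_greenMul_mul_of_ne (hB : ∀ u v, Measurable fun ω => B ω u v)
    (hrows : iIndepFun (fun u ω => fun v => B ω u v) μ) {u v : n} (huv : u ≠ v) (z w : ℂ) :
    ∫ ω, (greenMul (B ω) N z u v * greenMul (B ω) N w u v) *
        (greenMul (B ω) N z v u * greenMul (B ω) N w v u) ∂μ =
      (∫ ω, greenMul (B ω) N z u v * greenMul (B ω) N w u v ∂μ) *
        ∫ ω, greenMul (B ω) N z v u * greenMul (B ω) N w v u ∂μ := by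
  set rowProduct : n → (n → ℝ) → ℂ := fun x r =>
    (((↑) ∘ r : n → ℂ) ᵥ* (1 - z • N.map Complex.ofReal)⁻¹) x *
      (((↑) ∘ r : n → ℂ) ᵥ* (1 - w • N.map Complex.ofReal)⁻¹) x
  have hmeas : ∀ x, Measurable (rowProduct x) := fun x => by fun_prop
  -- `greenMul (B ω) N z u v` unfolds to a `vecMul` of the row `B ω u`.
  have hindep := (hrows.indepFun huv).comp (hmeas v) (hmeas u)
  have hg := measurable_greenMul_apply hB N
  exact hindep.integral_fun_mul_eq_mul_integral
    ((hg z u v).mul (hg w u v)).aestronglyMeasurable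
    ((hg z v u).mul (hg w v u)).aestronglyMeasurable

end RandomMatrix

end Matrix

theorem alpha_generating_function_eq_green_general {V : Type*} [Fintype V] [DecidableEq V]
    (G : SimpleGraph V) [DecidableRel G.Adj] (o : V)
    (M : Matrix V V ℝ)
    (hM : ∀ u v : V, M u v = if G.Adj u v then (1 : ℝ) / (G.degree u) else 0)
    {Ω : Type*} [MeasurableSpace Ω] (μ : Measure Ω) [IsProbabilityMeasure μ]
    (B : Ω → Matrix V V ℝ) (hBmeas : ∀ u v, Measurable fun ω => B ω u v)
    (c₁ : ℝ)
    (hBbound : ∀ᵐ ω ∂μ, ∀ u v, |B ω u v| ≤ c₁ * M u v)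
    (hrows : iIndepFun
      (fun u ω => fun v => B ω u v) μ)
    (Y : ℕ → V → V → Ω → ℝ)
    (hY : ∀ j v w ω, Y j v w ω =
      ∑ p ∈ (Finset.range j ×ˢ Finset.range j).filter (fun p => p.1 + p.2 + 2 = j),
        (B ω * M ^ p.1) v w * (B ω * M ^ p.2) w v)
    (α : ℕ → ℕ → ℝ)
    (hα : ∀ i j, α i j = ∫ ω, ∑ v ∈ Finset.univ.erase o, Y i o v ω * Y j o v ω ∂μ)
    (lam mu : ℂ) (hlam : ‖lam‖ < 1) (hmu : ‖mu‖ < 1) :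
    Summable (fun p : ℕ × ℕ =>
      ‖(α p.1 p.2 : ℂ) * lam ^ p.1 * mu ^ p.2‖) ∧
    (∑' p : ℕ × ℕ, (α p.1 p.2 : ℂ) * lam ^ p.1 * mu ^ p.2) =
      lam ^ 2 * mu ^ 2 *
        ∑ v ∈ Finset.univ.erase o,
          (∫ ω, ((B ω).map Complex.ofReal *
                  ((1 : Matrix V V ℂ) - lam • M.map Complex.ofReal)⁻¹) o v *
                ((B ω).map Complex.ofReal *
                  ((1 : Matrix V V ℂ) - mu • M.map Complex.ofReal)⁻¹) o v ∂μ) *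
          (∫ ω, ((B ω).map Complex.ofReal *
                  ((1 : Matrix V V ℂ) - lam • M.map Complex.ofReal)⁻¹) v o *
                ((B ω).map Complex.ofReal *
                  ((1 : Matrix V V ℂ) - mu • M.map Complex.ofReal)⁻¹) v o ∂μ) := by
  obtain rfl : Y = fun j v w ω => loopCoeff (B ω) M j v w :=
    funext fun j => funext fun v => funext fun w => funext fun ω => hY j v w ω
  have hMrow := G.sum_norm_le_one_of_randomWalk hM
  have hBrow : ∀ᵐ ω ∂μ, ∀ u, ∑ w, ‖B ω u w‖ ≤ |c₁| := by
    filter_upwards [hBbound] with ω hω u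
    calc ∑ w, ‖B ω u w‖ ≤ ∑ w, |c₁| * ‖M u w‖ := sum_le_sum fun w _ =>
          (hω u w).trans (by rw [Real.norm_eq_abs, ← abs_mul]; exact le_abs_self _)
      _ ≤ |c₁| := by rw [← mul_sum]; exact mul_le_of_le_one_right (abs_nonneg _) (hMrow u)
  have h := hasSum_integral_sum_loopCoeff_mul_loopCoeff hBmeas hMrow hBrow (univ.erase o) o
    hlam hmu (μ := μ)
  simp only [← hα] at h
  rw [sum_congr rfl fun v hv =>
    integral_greenMul_mul_of_ne hBmeas hrows (ne_of_mem_erase hv).symm lam mu] at h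
  exact ⟨summable_norm_iff.mpr h.summable, h.tsum_eq⟩

/-- For a finite graph with walk matrix `M`, a random matrix `B` with
independent rows and `|B_{u,v}| ≤ c₁ M_{u,v}` a.s., and Green functions
`𝒢_λ = (I - λM)⁻¹`, the generating function of the coefficients `α_{ij}` factorizes:
`∑_{i,j} α_{ij} λ^i μ^j = λ²μ² ∑_{v≠o} E[(B𝒢_λ)_{ov}(B𝒢_μ)_{ov}] E[(B𝒢_λ)_{vo}(B𝒢_μ)_{vo}]`,
the series on the left converging absolutely. -/
theorem alpha_generating_function_eq_green {V : Type*} [Fintype V] [DecidableEq V]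
    (G : SimpleGraph V) [DecidableRel G.Adj] (o : V)
    (M : Matrix V V ℝ)
    (hM : ∀ u v : V, M u v = if G.Adj u v then (1 : ℝ) / (G.degree u) else 0)
    {Ω : Type*} [MeasurableSpace Ω] (μ : Measure Ω) [IsProbabilityMeasure μ]
    (B : Ω → Matrix V V ℝ) (hBmeas : ∀ u v, Measurable fun ω => B ω u v)
    (c₁ : ℝ) (hc₁ : 0 < c₁)
    (hBbound : ∀ᵐ ω ∂μ, ∀ u v, |B ω u v| ≤ c₁ * M u v)
    (hrows : iIndepFun
      (fun u ω => fun v => B ω u v) μ)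
    (Y : ℕ → V → V → Ω → ℝ)
    (hY : ∀ j v w ω, Y j v w ω =
      ∑ p ∈ (Finset.range j ×ˢ Finset.range j).filter (fun p => p.1 + p.2 + 2 = j),
        (B ω * M ^ p.1) v w * (B ω * M ^ p.2) w v)
    (α : ℕ → ℕ → ℝ)
    (hα : ∀ i j, α i j = ∫ ω, ∑ v ∈ Finset.univ.erase o, Y i o v ω * Y j o v ω ∂μ)
    (lam mu : ℂ) (hlam : ‖lam‖ < 1) (hmu : ‖mu‖ < 1) :
    Summable (fun p : ℕ × ℕ =>
      ‖(α p.1 p.2 : ℂ) * lam ^ p.1 * mu ^ p.2‖) ∧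
    (∑' p : ℕ × ℕ, (α p.1 p.2 : ℂ) * lam ^ p.1 * mu ^ p.2) =
      lam ^ 2 * mu ^ 2 *
        ∑ v ∈ Finset.univ.erase o,
          (∫ ω, ((B ω).map Complex.ofReal *
                  ((1 : Matrix V V ℂ) - lam • M.map Complex.ofReal)⁻¹) o v *
                ((B ω).map Complex.ofReal *
                  ((1 : Matrix V V ℂ) - mu • M.map Complex.ofReal)⁻¹) o v ∂μ) *
          (∫ ω, ((B ω).map Complex.ofReal *
                  ((1 : Matrix V V ℂ) - lam • M.map Complex.ofReal)⁻¹) v o *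
                ((B ω).map Complex.ofReal *
                  ((1 : Matrix V V ℂ) - mu • M.map Complex.ofReal)⁻¹) v o ∂μ) :=
  alpha_generating_function_eq_green_general G o M hM μ B hBmeas c₁ hBbound hrows Y hY α hα lam mu
    hlam hmu
end

section
/- Let G be a finite vertex-transitive graph of degree d with simple random walk transition matrix M, fix a vertex o, and let B be a random real matrix indexed by the vertices of G satisfying: B_{u,v} has mean 0 and variance 1 for every edge uv, |B_{u,v}| \le c_1 M_{u,v} almost surely, the rows (B_{u,\cdot})_u are independent, \sum_{g \in Stab(u)} B_{u,gv} = 0 for all u, v (Stab(u) the stabilizer of u in Aut(G)), and the law of B is invariant under Aut(G) (i.e., (B_{gu,gv})_{u,v} has the same law as B for every automorphism g). Define Y_j(G,v,w) = \sum_{j_1+j_2+2=j,\, j_1,j_2 \ge 0}(BM^{j_1})_{v,w}(BM^{j_2})_{w,v} and T_G(z^j) = |G|^{-1/2}(j/2)\sum_{k_1+k_2+2=j} Tr(BM^{k_1}BM^{k_2}). Then for all integers i, j \ge 0: E[T_G(z^j)] = 0 and E[T_G(z^i) T_G(z^j)] = (ij/2) \sum_{v \ne o} E[ Y_i(G,o,v)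 Y_j(G,o,v) ]. -/
/-!
Expanding the trace, `T_G(z^k) = |G|^{-1/2} (k/2) ∑_{v,w} Y_k(v, w)`. Averaging the stabilizer
condition over `Stab(v)`, which fixes `M^p`, gives `(BM^p)_{vv} = 0`, so `Y_k(v, v) = 0`.
Each entry `(BM^p)_{vw}` is a centred function of the row `v` of `B` alone, so by independence
of the rows a product of such entries has mean zero as soon as one row occurs exactly once.
Hence `E Y_k(v, w) = 0`, and `E[Y_i(v, w) Y_j(v', w')]` vanishes unless `{v', w'} = {v, w}`;
as `Y` is symmetric, `E[T_G(z^i) T_G(z^j)] = |G|⁻¹ (ij/2) ∑_{v,w} E[Y_i(v, w) Y_j(v, w)]`.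
Finally, `Aut(G)` preserves `M` and the law of `B` and acts transitively, so the inner sum over
`w` does not depend on `v`, and the factor `|G|` cancels.
-/

open Matrix Finset MeasureTheory ProbabilityTheory

theorem ProbabilityTheory.iIndepFun.integral_mul_eq_zero_of_disjoint {ι Ω β : Type*}
    {mΩ : MeasurableSpace Ω} {μ : Measure Ω} {mβ : MeasurableSpace β} {R : ι → Ω → β}
    (hR : iIndepFun R μ) (hRm : ∀ i, Measurable (R i)) {S T : Set ι} (hST : Disjoint S T)
    {X Z : Ω → ℝ} (hX : Measurable[⨆ i ∈ S, mβ.comap (R i)] X)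
    (hZ : Measurable[⨆ i ∈ T, mβ.comap (R i)] Z) (hX0 : ∫ ω, X ω ∂μ = 0) :
    ∫ ω, X ω * Z ω ∂μ = 0 := by
  have hle : ∀ U : Set ι, ⨆ i ∈ U, mβ.comap (R i) ≤ mΩ := fun U =>
    iSup₂_le fun i _ => (hRm i).comap_le
  have hXZ : IndepFun X Z μ := by
    rw [IndepFun_iff_Indep]
    exact indep_of_indep_of_le_right
      (indep_of_indep_of_le_left
        (indep_iSup_of_disjoint (fun i => (hRm i).comap_le)
          ((iIndepFun_iff_iIndep _ _ _).1 hR) hST) hX.comap_le) hZ.comap_le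
  have := hXZ.integral_mul_eq_mul_integral (hX.mono (hle S) le_rfl).aestronglyMeasurable
    (hZ.mono (hle T) le_rfl).aestronglyMeasurable
  simpa [hX0] using this

namespace Matrix

variable {n α : Type*} [Fintype n]

theorem submatrix_pow_of_submatrix_eq [DecidableEq n] [Semiring α] {N : Matrix n n α}
    {e : n ≃ n} (h : N.submatrix e e = N) (k : ℕ) : (N ^ k).submatrix e e = N ^ k := by
  simpa [coe_reindexAlgEquiv, h] using map_pow (reindexAlgEquiv ℕ α e.symm) N k

theorem mul_apply_self_eq_zero_of_sum_perm [Semiring α] [IsAddTorsionFree α] (A N : Matrix n n α)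
    {u : n} {S : Finset (Equiv.Perm n)} (hS : S.Nonempty) (hN : ∀ g ∈ S, ∀ a, N (g a) u = N a u)
    (hA : ∀ a, ∑ g ∈ S, A u (g a) = 0) : (A * N) u u = 0 := by
  have h : #S • (A * N) u u = 0 := calc
    #S • (A * N) u u = ∑ g ∈ S, ∑ a, A u (g a) * N (g a) u := by
      rw [← sum_const]
      exact sum_congr rfl fun g _ => (Equiv.sum_comp g fun a => A u a * N a u).symm
    _ = ∑ a, (∑ g ∈ S, A u (g a)) * N a u := by
      simp_rw [sum_mul]
      rw [sum_comm]
      exact sum_congr rfl fun a _ => sum_congr rfl fun g hg => by rw [hN g hg]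
    _ = 0 := by simp [hA]
  exact (nsmul_eq_zero_iff.1 h).resolve_right hS.card_pos.ne'

end Matrix

section WalkPairSum

variable {n α : Type*} [Fintype n] [DecidableEq n] [CommSemiring α]

/-- `Y_k(v, w)` of the statement, for `A = B` and `N = M`. -/
def walkPairSum (A N : Matrix n n α) (k : ℕ) (v w : n) : α :=
  ∑ p ∈ (range k ×ˢ range k).filter (fun p => p.1 + p.2 + 2 = k),
    (A * N ^ p.1) v w * (A * N ^ p.2) w v

theorem walkPairSum_comm (A N : Matrix n n α) (k : ℕ) (v w : n) :
    walkPairSum A N k w v = walkPairSum A N k v w := by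
  refine sum_nbij' Prod.swap Prod.swap ?_ ?_ (fun _ _ => rfl) (fun _ _ => rfl)
    fun _ _ => mul_comm _ _ <;>
  · intro p hp
    simp only [mem_filter, mem_product, mem_range, Prod.fst_swap, Prod.snd_swap] at hp ⊢
    omega

theorem walkPairSum_self {A N : Matrix n n α} {v : n} (h : ∀ p, (A * N ^ p) v v = 0) (k : ℕ) :
    walkPairSum A N k v v = 0 :=
  sum_eq_zero fun p _ => by rw [h, zero_mul]

theorem walkPairSum_submatrix {N : Matrix n n α} {e : n ≃ n} (hN : N.submatrix e e = N)
    (A : Matrix n n α) (k : ℕ) (v w : n) :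
    walkPairSum (A.submatrix e e) N k v w = walkPairSum A N k (e v) (e w) := by
  have h : ∀ p, A.submatrix e e * N ^ p = (A * N ^ p).submatrix e e := fun p => by
    rw [← submatrix_mul_equiv _ _ _ e, submatrix_pow_of_submatrix_eq hN]
  simp only [walkPairSum, h, submatrix_apply]

theorem sum_trace_eq_sum_walkPairSum (A N : Matrix n n α) (k : ℕ) :
    ∑ p ∈ (range k ×ˢ range k).filter (fun p => p.1 + p.2 + 2 = k),
      (A * N ^ p.1 * A * N ^ p.2).trace = ∑ v, ∑ w, walkPairSum A N k v w := by
  have htrace : ∀ X Y : Matrix n n α, (X * Y).trace = ∑ v, ∑ w, X v w * Y w v := fun _ _ => rfl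
  simp only [walkPairSum, mul_assoc _ A, htrace]
  rw [sum_comm]
  exact sum_congr rfl fun v _ => sum_comm

end WalkPairSum

section Invariance

variable {V Ω : Type*} [MeasurableSpace Ω] {μ : Measure Ω} {B : Ω → Matrix V V ℝ}

theorem integral_comp_submatrix_of_map_eq (hBm : ∀ u v, Measurable fun ω => B ω u v)
    {e : V ≃ V} (hinv : μ.map (fun ω u v => B ω (e u) (e v)) = μ.map (fun ω u v => B ω u v))
    {F : (V → V → ℝ) → ℝ} (hF : Measurable F) :
    ∫ ω, F ((B ω).submatrix e e) ∂μ = ∫ ω, F (B ω) ∂μ := by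
  have hφ : ∀ e' : V → V, Measurable fun ω (u v : V) => B ω (e' u) (e' v) := fun e' =>
    measurable_pi_lambda _ fun u => measurable_pi_lambda _ fun v => hBm _ _
  calc ∫ ω, F ((B ω).submatrix e e) ∂μ
      = ∫ A, F A ∂(μ.map fun ω u v => B ω (e u) (e v)) :=
        (integral_map (hφ e).aemeasurable hF.aestronglyMeasurable).symm
    _ = ∫ ω, F (B ω) ∂μ := by
        rw [hinv]
        exact integral_map (hφ id).aemeasurable hF.aestronglyMeasurable

variable [Fintype V] [DecidableEq V]

theorem measurable_walkPairSum (N : Matrix V V ℝ) (k : ℕ) (v w : V) :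
    Measurable fun A : V → V → ℝ => walkPairSum (of A) N k v w := by
  have h : ∀ (P : Matrix V V ℝ) u x, Measurable fun A : V → V → ℝ => (of A * P) u x :=
    fun P u x => Finset.measurable_sum _ fun a _ =>
      ((measurable_pi_apply a).comp (measurable_pi_apply u)).mul_const _
  exact Finset.measurable_sum _ fun _ _ => (h _ _ _).mul (h _ _ _)

theorem sum_integral_walkPairSum_mul_eq_card_mul (hBm : ∀ u v, Measurable fun ω => B ω u v)
    {N : Matrix V V ℝ} (o : V)
    (htrans : ∀ v, ∃ e : V ≃ V, N.submatrix e e = N ∧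
      μ.map (fun ω u v => B ω (e u) (e v)) = μ.map (fun ω u v => B ω u v) ∧ e o = v)
    (i j : ℕ) :
    ∑ P : V × V, ∫ ω, walkPairSum (B ω) N i P.1 P.2 * walkPairSum (B ω) N j P.1 P.2 ∂μ =
      Fintype.card V * ∑ w, ∫ ω, walkPairSum (B ω) N i o w * walkPairSum (B ω) N j o w ∂μ := by
  have horbit : ∀ v, ∑ w, ∫ ω, walkPairSum (B ω) N i v w * walkPairSum (B ω) N j v w ∂μ =
      ∑ w, ∫ ω, walkPairSum (B ω) N i o w * walkPairSum (B ω) N j o w ∂μ := fun v => by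
    obtain ⟨e, hN, hinv, rfl⟩ := htrans v
    rw [← Equiv.sum_comp e]
    refine sum_congr rfl fun w _ => ?_
    simp only [← walkPairSum_submatrix hN]
    exact integral_comp_submatrix_of_map_eq hBm hinv
      ((measurable_walkPairSum N i o w).mul (measurable_walkPairSum N j o w))
  rw [Fintype.sum_prod_type, sum_congr rfl fun v _ => horbit v, sum_const, card_univ,
    nsmul_eq_mul]

end Invariance

section RandomMatrix

variable {V Ω : Type*} {B : Ω → Matrix V V ℝ}

abbrev rowSigma (B : Ω → Matrix V V ℝ) (S : Set V) : MeasurableSpace Ω :=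
  ⨆ i ∈ S, MeasurableSpace.comap (fun ω => B ω i) inferInstance

theorem measurable_mul_apply_rowSigma [Fintype V] (N : Matrix V V ℝ) {S : Set V} {u : V}
    (hu : u ∈ S) (w : V) : Measurable[rowSigma B S] fun ω => (B ω * N) u w := by
  have hrow : Measurable[rowSigma B S] fun ω => B ω u :=
    (comap_measurable _).mono
      (le_iSup₂ (f := fun i (_ : i ∈ S) => MeasurableSpace.comap (fun ω => B ω i) _) u hu) le_rfl
  simp only [mul_apply]
  exact Finset.measurable_sum _ fun a _ => ((measurable_pi_apply a).comp hrow).mul_const _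

theorem measurable_walkPairSum_rowSigma [Fintype V] [DecidableEq V] (N : Matrix V V ℝ) (k : ℕ)
    {S : Set V} {v w : V} (hv : v ∈ S) (hw : w ∈ S) :
    Measurable[rowSigma B S] fun ω => walkPairSum (B ω) N k v w :=
  Finset.measurable_sum _ fun _ _ =>
    (measurable_mul_apply_rowSigma _ hv w).mul (measurable_mul_apply_rowSigma _ hw v)

variable [MeasurableSpace Ω] {μ : Measure Ω}

structure IsBddCenteredIndepRows (μ : Measure Ω) (B : Ω → Matrix V V ℝ) : Prop where
  measurable : ∀ u v, Measurable fun ω => B ω u v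
  memLp_top : ∀ u v, MemLp (fun ω => B ω u v) ⊤ μ
  integral_eq_zero : ∀ u v, ∫ ω, B ω u v ∂μ = 0
  iIndepFun_rows : iIndepFun (fun u ω => B ω u) μ

theorem isBddCenteredIndepRows_of_abs_le {K : Matrix V V ℝ}
    (hBm : ∀ u v, Measurable fun ω => B ω u v) (hK : ∀ᵐ ω ∂μ, ∀ u v, |B ω u v| ≤ K u v)
    (hmean : ∀ u v, K u v ≠ 0 → ∫ ω, B ω u v ∂μ = 0)
    (hrows : iIndepFun (fun u ω => B ω u) μ) : IsBddCenteredIndepRows μ B where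
  measurable := hBm
  memLp_top u v := memLp_top_of_bound (hBm u v).aestronglyMeasurable (K u v) <| by
    filter_upwards [hK] with ω hω using hω u v
  integral_eq_zero u v := by
    by_cases huv : K u v = 0
    · have hzero : (fun ω => B ω u v) =ᵐ[μ] 0 := by
        filter_upwards [hK] with ω hω
        simpa [huv] using hω u v
      simp [integral_congr_ae hzero]
    · exact hmean u v huv
  iIndepFun_rows := hrows

namespace IsBddCenteredIndepRows

variable [Fintype V]

theorem memLp_top_mul_apply (hB : IsBddCenteredIndepRows μ B) (N : Matrix V V ℝ) (u w : V) :
    MemLp (fun ω => (B ω * N) u w) ⊤ μ := by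
  simp only [mul_apply]
  exact memLp_finsetSum _ fun a _ => (hB.memLp_top u a).mul_const _

theorem integral_mul_apply_eq_zero [IsFiniteMeasure μ] (hB : IsBddCenteredIndepRows μ B)
    (N : Matrix V V ℝ) (u w : V) : ∫ ω, (B ω * N) u w ∂μ = 0 := by
  simp only [mul_apply]
  rw [integral_finsetSum _ fun a _ => ((hB.memLp_top u a).integrable le_top).mul_const _]
  simp [integral_mul_const, hB.integral_eq_zero]

theorem integral_mul_apply_mul_eq_zero [IsFiniteMeasure μ] (hB : IsBddCenteredIndepRows μ B)
    (N : Matrix V V ℝ) {x : V} (c : V) {S : Set V} (hx : x ∉ S) {Z : Ω → ℝ}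
    (hZ : Measurable[rowSigma B S] Z) :
    ∫ ω, (B ω * N) x c * Z ω ∂μ = 0 :=
  hB.iIndepFun_rows.integral_mul_eq_zero_of_disjoint
    (fun u => measurable_pi_lambda _ (hB.measurable u)) (Set.disjoint_singleton_left.2 hx)
    (measurable_mul_apply_rowSigma N (Set.mem_singleton x) c) hZ
    (hB.integral_mul_apply_eq_zero N x c)

variable [DecidableEq V]

theorem memLp_top_walkPairSum (hB : IsBddCenteredIndepRows μ B) (N : Matrix V V ℝ) (k : ℕ)
    (v w : V) : MemLp (fun ω => walkPairSum (B ω) N k v w) ⊤ μ :=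
  memLp_finsetSum _ fun _ _ => (hB.memLp_top_mul_apply _ w v).mul (hB.memLp_top_mul_apply _ v w)

variable [IsFiniteMeasure μ]

theorem integrable_walkPairSum_mul (hB : IsBddCenteredIndepRows μ B) (N : Matrix V V ℝ)
    (i j : ℕ) (v w v' w' : V) :
    Integrable (fun ω => walkPairSum (B ω) N i v w * walkPairSum (B ω) N j v' w') μ :=
  ((hB.memLp_top_walkPairSum N j v' w').mul (hB.memLp_top_walkPairSum N i v w)).integrable le_top

theorem integral_walkPairSum_eq_zero (hB : IsBddCenteredIndepRows μ B) {N : Matrix V V ℝ}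
    (hdiag : ∀ ω p v, (B ω * N ^ p) v v = 0) (k : ℕ) (v w : V) :
    ∫ ω, walkPairSum (B ω) N k v w ∂μ = 0 := by
  obtain rfl | hvw := eq_or_ne v w
  · simp [walkPairSum_self (hdiag _ · v)]
  · simp only [walkPairSum]
    rw [integral_finsetSum _ fun p _ => ?_]
    · exact sum_eq_zero fun p _ => hB.integral_mul_apply_mul_eq_zero (N ^ p.1) w
        (Set.mem_singleton_iff.not.2 hvw)
        (measurable_mul_apply_rowSigma (N ^ p.2) (Set.mem_singleton w) v)
    · exact ((hB.memLp_top_mul_apply _ w v).mul (hB.memLp_top_mul_apply _ v w)).integrable le_top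

/-- The row `v'` occurs only once in the product, and its entries are centred. -/
theorem integral_walkPairSum_mul_eq_zero_of_notMem (hB : IsBddCenteredIndepRows μ B)
    (N : Matrix V V ℝ) (i j : ℕ) {v w v' w' : V} (hv' : v' ∉ ({v, w, w'} : Set V)) :
    ∫ ω, walkPairSum (B ω) N i v w * walkPairSum (B ω) N j v' w' ∂μ = 0 := by
  have hsplit : ∀ ω, walkPairSum (B ω) N i v w * walkPairSum (B ω) N j v' w' =
      ∑ q ∈ (range j ×ˢ range j).filter (fun q => q.1 + q.2 + 2 = j),
        (B ω * N ^ q.1) v' w' * (walkPairSum (B ω) N i v w * (B ω * N ^ q.2) w' v') := by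
    intro ω
    simp only [walkPairSum, mul_sum]
    exact sum_congr rfl fun q _ => by ring
  rw [integral_congr_ae (ae_of_all _ hsplit), integral_finsetSum _ fun q _ => ?_]
  · refine sum_eq_zero fun q _ => hB.integral_mul_apply_mul_eq_zero _ w' hv' ?_
    exact (measurable_walkPairSum_rowSigma N i (by simp) (by simp)).mul
      (measurable_mul_apply_rowSigma _ (by simp) v')
  · exact (((hB.memLp_top_mul_apply _ w' v').mul (r := ⊤) (hB.memLp_top_walkPairSum N i v w)).mul
      (hB.memLp_top_mul_apply _ v' w')).integrable le_top

theorem integral_walkPairSum_mul_eq_zero (hB : IsBddCenteredIndepRows μ B) {N : Matrix V V ℝ}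
    (hdiag : ∀ ω p v, (B ω * N ^ p) v v = 0) (i j : ℕ) {v w v' w' : V}
    (h₁ : (v', w') ≠ (v, w)) (h₂ : (v', w') ≠ (w, v)) :
    ∫ ω, walkPairSum (B ω) N i v w * walkPairSum (B ω) N j v' w' ∂μ = 0 := by
  obtain rfl | hvw := eq_or_ne v w
  · simp [walkPairSum_self (hdiag _ · v)]
  obtain rfl | hvw' := eq_or_ne v' w'
  · simp [walkPairSum_self (hdiag _ · v')]
  by_cases hv' : v' ∈ ({v, w} : Set V)
  · simp only [walkPairSum_comm _ N j w' v']
    refine hB.integral_walkPairSum_mul_eq_zero_of_notMem N i j ?_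
    simp only [Set.mem_insert_iff, Set.mem_singleton_iff] at hv' h₁ h₂ ⊢
    grind
  · refine hB.integral_walkPairSum_mul_eq_zero_of_notMem N i j ?_
    simp only [Set.mem_insert_iff, Set.mem_singleton_iff] at hv' ⊢
    grind

theorem integral_sum_walkPairSum_mul_sum (hB : IsBddCenteredIndepRows μ B) {N : Matrix V V ℝ}
    (hdiag : ∀ ω p v, (B ω * N ^ p) v v = 0) (i j : ℕ) :
    ∫ ω, (∑ P : V × V, walkPairSum (B ω) N i P.1 P.2) *
      (∑ Q : V × V, walkPairSum (B ω) N j Q.1 Q.2) ∂μ =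
      2 * ∑ P : V × V, ∫ ω, walkPairSum (B ω) N i P.1 P.2 * walkPairSum (B ω) N j P.1 P.2 ∂μ := by
  simp_rw [sum_mul_sum]
  rw [integral_finsetSum _ fun _ _ => integrable_finsetSum _ fun _ _ =>
    hB.integrable_walkPairSum_mul N i j _ _ _ _, mul_sum]
  refine sum_congr rfl fun P _ => ?_
  rw [integral_finsetSum _ fun _ _ => hB.integrable_walkPairSum_mul N i j _ _ _ _]
  obtain ⟨v, w⟩ := P
  obtain rfl | hvw := eq_or_ne v w
  · simp [walkPairSum_self (hdiag _ · v)]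
  rw [Fintype.sum_eq_add (v, w) (w, v) (by simp [hvw]) fun Q hQ =>
    hB.integral_walkPairSum_mul_eq_zero hdiag i j hQ.1 hQ.2]
  simp only [walkPairSum_comm _ N j v w]
  ring

theorem integral_sum_walkPairSum_mul_sum_eq_card_mul (hB : IsBddCenteredIndepRows μ B)
    {N : Matrix V V ℝ} (hdiag : ∀ ω p v, (B ω * N ^ p) v v = 0) (o : V)
    (htrans : ∀ v, ∃ e : V ≃ V, N.submatrix e e = N ∧
      μ.map (fun ω u v => B ω (e u) (e v)) = μ.map (fun ω u v => B ω u v) ∧ e o = v)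
    (i j : ℕ) :
    ∫ ω, (∑ P : V × V, walkPairSum (B ω) N i P.1 P.2) *
      (∑ Q : V × V, walkPairSum (B ω) N j Q.1 Q.2) ∂μ =
      2 * Fintype.card V *
        ∑ w ∈ univ.erase o, ∫ ω, walkPairSum (B ω) N i o w * walkPairSum (B ω) N j o w ∂μ := by
  rw [hB.integral_sum_walkPairSum_mul_sum hdiag, sum_integral_walkPairSum_mul_eq_card_mul
    hB.measurable o htrans, ← sum_erase_add _ _ (mem_univ o)]
  simp only [walkPairSum_self (hdiag _ · o), zero_mul, integral_zero, add_zero]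
  ring

end IsBddCenteredIndepRows

end RandomMatrix

theorem monomial_covariance_general {V : Type*} [Fintype V] [DecidableEq V]
    (G : SimpleGraph V) [DecidableRel G.Adj] (o : V) (d : ℕ)
    (htrans : ∀ u v : V, ∃ e : Equiv.Perm V,
      (∀ a b : V, G.Adj (e a) (e b) ↔ G.Adj a b) ∧ e u = v)
    (M : Matrix V V ℝ)
    (hM : ∀ u v : V, M u v = if G.Adj u v then (1 : ℝ) / d else 0)
    {Ω : Type*} [MeasurableSpace Ω] (μ : Measure Ω) [IsProbabilityMeasure μ]
    (B : Ω → Matrix V V ℝ) (hBmeas : ∀ u v, Measurable fun ω => B ω u v)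
    (c₁ : ℝ)
    (hmean : ∀ u v : V, G.Adj u v → (∫ ω, B ω u v ∂μ) = 0)
    (hBbound : ∀ᵐ ω ∂μ, ∀ u v, |B ω u v| ≤ c₁ * M u v)
    (hrows : iIndepFun (m := fun _ : V => (inferInstance : MeasurableSpace (V → ℝ)))
      (fun u ω => fun v => B ω u v) μ)
    (hstab : ∀ ω, ∀ u v : V,
      ∑ g ∈ Finset.univ.filter
          (fun e : Equiv.Perm V =>
            (∀ a b : V, G.Adj (e a) (e b) ↔ G.Adj a b) ∧ e u = u),
        B ω u (g v) = 0)
    (hinv : ∀ e : Equiv.Perm V, (∀ a b : V, G.Adj (e a) (e b) ↔ G.Adj a b) →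
      Measure.map (fun ω => fun u v : V => B ω (e u) (e v)) μ =
        Measure.map (fun ω => fun u v : V => B ω u v) μ)
    (Y : ℕ → V → V → Ω → ℝ)
    (hY : ∀ j v w ω, Y j v w ω =
      ∑ p ∈ (Finset.range j ×ˢ Finset.range j).filter (fun p => p.1 + p.2 + 2 = j),
        (B ω * M ^ p.1) v w * (B ω * M ^ p.2) w v)
    (T : ℕ → Ω → ℝ)
    (hT : ∀ j ω, T j ω = (Real.sqrt (Fintype.card V))⁻¹ * ((j : ℝ) / 2) *
      ∑ p ∈ (Finset.range j ×ˢ Finset.range j).filter (fun p => p.1 + p.2 + 2 = j),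
        (B ω * M ^ p.1 * (B ω) * M ^ p.2).trace)
    (i j : ℕ) :
    (∫ ω, T j ω ∂μ) = 0 ∧
    (∫ ω, T i ω * T j ω ∂μ) =
      ((i : ℝ) * j / 2) *
        ∑ v ∈ Finset.univ.erase o, ∫ ω, Y i o v ω * Y j o v ω ∂μ := by
  have hMaut : ∀ e : Equiv.Perm V, (∀ a b, G.Adj (e a) (e b) ↔ G.Adj a b) →
      M.submatrix e e = M := fun e he => by
    ext a b
    simp [hM, he]
  have hdiag : ∀ ω p v, (B ω * M ^ p) v v = 0 := fun ω p v =>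
    mul_apply_self_eq_zero_of_sum_perm _ _ ⟨1, by simp⟩ (fun g hg a => by
      obtain ⟨hg, hgv⟩ := (mem_filter.1 hg).2
      conv_lhs => rw [← hgv]
      exact congrFun₂ (submatrix_pow_of_submatrix_eq (hMaut g hg) p) a v) (hstab ω v)
  have hB : IsBddCenteredIndepRows μ B := isBddCenteredIndepRows_of_abs_le hBmeas hBbound
    (fun u v huv => hmean u v (by_contra fun h => huv (by simp [hM, h]))) hrows
  obtain rfl : Y = fun k v w ω => walkPairSum (B ω) M k v w := by
    funext k v w ω
    exact hY k v w ω
  obtain rfl : T = fun k ω => (√(Fintype.card V))⁻¹ * (k / 2) *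
      ∑ P : V × V, walkPairSum (B ω) M k P.1 P.2 := by
    funext k ω
    rw [hT, sum_trace_eq_sum_walkPairSum, Fintype.sum_prod_type]
  have htrans' : ∀ v, ∃ e : V ≃ V, M.submatrix e e = M ∧
      μ.map (fun ω u v => B ω (e u) (e v)) = μ.map (fun ω u v => B ω u v) ∧ e o = v :=
    fun v => let ⟨e, he, heo⟩ := htrans o v; ⟨e, hMaut e he, hinv e he, heo⟩
  refine ⟨?_, ?_⟩
  · rw [integral_const_mul, integral_finsetSum _ fun P _ =>
      (hB.memLp_top_walkPairSum M j P.1 P.2).integrable le_top]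
    simp [hB.integral_walkPairSum_eq_zero hdiag]
  · have hn : (0 : ℝ) < Fintype.card V := Nat.cast_pos.2 (Fintype.card_pos_iff.2 ⟨o⟩)
    rw [integral_congr_ae (ae_of_all _ fun ω => mul_mul_mul_comm _ _ _ _), integral_const_mul,
      hB.integral_sum_walkPairSum_mul_sum_eq_card_mul hdiag o htrans']
    field_simp
    rw [Real.sq_sqrt hn.le]
    ring

/-- For a finite vertex-transitive graph `G` with walk matrix `M` and a
random matrix `B` (mean-zero, variance-one entries on edges, `|B| ≤ c₁ M` a.s.,
independent rows, stabilizer sums zero, law invariant under `Aut(G)`),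
the functionals `T_G(z^j)` have mean zero and covariance
`E[T_G(z^i)T_G(z^j)] = (ij/2) ∑_{v≠o} E[Y_i(G,o,v) Y_j(G,o,v)]`. -/
theorem monomial_covariance {V : Type*} [Fintype V] [DecidableEq V]
    (G : SimpleGraph V) [DecidableRel G.Adj] (o : V) (d : ℕ)
    (hreg : ∀ v : V, G.degree v = d)
    (htrans : ∀ u v : V, ∃ e : Equiv.Perm V,
      (∀ a b : V, G.Adj (e a) (e b) ↔ G.Adj a b) ∧ e u = v)
    (M : Matrix V V ℝ)
    (hM : ∀ u v : V, M u v = if G.Adj u v then (1 : ℝ) / d else 0)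
    {Ω : Type*} [MeasurableSpace Ω] (μ : Measure Ω) [IsProbabilityMeasure μ]
    (B : Ω → Matrix V V ℝ) (hBmeas : ∀ u v, Measurable fun ω => B ω u v)
    (c₁ : ℝ) (hc₁ : 0 < c₁)
    (hmean : ∀ u v : V, G.Adj u v → (∫ ω, B ω u v ∂μ) = 0)
    (hvar : ∀ u v : V, G.Adj u v → (∫ ω, (B ω u v) ^ 2 ∂μ) = 1)
    (hBbound : ∀ᵐ ω ∂μ, ∀ u v, |B ω u v| ≤ c₁ * M u v)
    (hrows : iIndepFun (m := fun _ : V => (inferInstance : MeasurableSpace (V → ℝ)))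
      (fun u ω => fun v => B ω u v) μ)
    (hstab : ∀ ω, ∀ u v : V,
      ∑ g ∈ Finset.univ.filter
          (fun e : Equiv.Perm V =>
            (∀ a b : V, G.Adj (e a) (e b) ↔ G.Adj a b) ∧ e u = u),
        B ω u (g v) = 0)
    (hinv : ∀ e : Equiv.Perm V, (∀ a b : V, G.Adj (e a) (e b) ↔ G.Adj a b) →
      Measure.map (fun ω => fun u v : V => B ω (e u) (e v)) μ =
        Measure.map (fun ω => fun u v : V => B ω u v) μ)
    (Y : ℕ → V → V → Ω → ℝ)
    (hY : ∀ j v w ω, Y j v w ω =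
      ∑ p ∈ (Finset.range j ×ˢ Finset.range j).filter (fun p => p.1 + p.2 + 2 = j),
        (B ω * M ^ p.1) v w * (B ω * M ^ p.2) w v)
    (T : ℕ → Ω → ℝ)
    (hT : ∀ j ω, T j ω = (Real.sqrt (Fintype.card V))⁻¹ * ((j : ℝ) / 2) *
      ∑ p ∈ (Finset.range j ×ˢ Finset.range j).filter (fun p => p.1 + p.2 + 2 = j),
        (B ω * M ^ p.1 * (B ω) * M ^ p.2).trace)
    (i j : ℕ) :
    (∫ ω, T j ω ∂μ) = 0 ∧
    (∫ ω, T i ω * T j ω ∂μ) =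
      ((i : ℝ) * j / 2) *
        ∑ v ∈ Finset.univ.erase o, ∫ ω, Y i o v ω * Y j o v ω ∂μ :=
  monomial_covariance_general G o d htrans M hM μ B hBmeas c₁ hmean hBbound hrows hstab hinv Y hY T
    hT i j
end

section
/- Let G be a finite vertex-transitive graph of degree d with simple random walk transition matrix M, fix a vertex o, and let B be a random real matrix indexed by the vertices of G satisfying: B_{u,v} has mean 0 and variance 1 for every edge uv, |B_{u,v}| \le c_1 M_{u,v} almost surely, the rows (B_{u,\cdot})_u are independent, \sum_{g \in Stab(u)} B_{u,gv} = 0 for all u, v, and the law of B is invariant under Aut(G). For f(z) = \sum_j a_j z^j with radius of convergence greater than 1, define T_G(f) = |G|^{-1/2} \sum_{j\ge 2} a_j (j/2) \sum_{k_1+k_2+2=j} Tr(BM^{k_1}BM^{k_2}); define Y_j(G,v,w) = \sum_{j_1+j_2+2=j}(BM^{j_1})_{v,w}(BM^{j_2})_{w,v}, \alpha_{ij} = E[\sum_{v\ne o} Y_i(G,o,v) Y_j(G,o,v)], and H_G(f,g) = (1/2)\sum_{i,j\ge 1} i j \alpha_{ij} [z^i]f \, [z^j]g. Then for all f, g with radius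 of convergence greater than 1: E[T_G(f)] = 0 and E[T_G(f) T_G(g)] = H_G(f,g). -/
open Matrix Finset MeasureTheory ProbabilityTheory

/-!
Write `S_j = ∑_{k₁+k₂+2=j} Tr(B M^k₁ B M^k₂) = ∑_{v,w} Y_j(v,w)`. The stabiliser condition kills
the diagonal of every `B M^k`, so `Y_j(v,v) = 0`; moreover `Y_j(v,w) = Y_j(w,v)` is linear in
row `w` of `B`, with coefficients depending on row `v` only. Since the rows are independent and
centred, `E[Y_i(v,w) F] = 0` whenever `F` depends only on rows other than `w`. Hence `E[S_j] = 0`,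
and `E[Y_i(v,w) Y_j(v',w')] = 0` unless `{v',w'} = {v,w}`, which leaves
`E[S_i S_j] = 2 ∑_v E[∑_{w≠v} Y_i(v,w) Y_j(v,w)] = 2 |G| α_{ij}` by vertex-transitivity and the
`Aut(G)`-invariance of the law of `B`. Finally `|B| ≤ c₁ M` with `M` substochastic gives
`|S_j| = O(j²)`, and radius of convergence `> 1` lets the expectation pass through the series.
-/

theorem summable_norm_mul_pow_of_summable_norm_mul_geometric {E : Type*}
    [SeminormedAddCommGroup E] {a : ℕ → E} {r : ℝ} (hr : 1 < r)
    (ha : Summable fun k => ‖a k‖ * r ^ k) (m : ℕ) :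
    Summable fun k => ‖a k‖ * (k : ℝ) ^ m := by
  refine Summable.of_norm_bounded_eventually_nat ha ?_
  filter_upwards [(tendsto_pow_const_div_const_pow_of_one_lt m hr).eventually
    (gt_mem_nhds one_pos)] with k hk
  have hrk : 0 < r ^ k := pow_pos (by linarith) k
  rw [div_lt_one hrk] at hk
  rw [Real.norm_of_nonneg (by positivity)]
  exact mul_le_mul_of_nonneg_left hk.le (norm_nonneg _)

section Integration

variable {Ω : Type*} [MeasurableSpace Ω] {μ : Measure Ω}

theorem integral_mul_eq_zero_of_iIndepFun_rows {ι κ : Type*} {X : Ω → ι → κ → ℝ}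
    (hX : ∀ i k, Measurable fun ω => X ω i k) (hind : iIndepFun (fun i ω => X ω i) μ)
    {w : ι} {y : κ} (hmean : ∫ ω, X ω w y ∂μ = 0) {t : Finset ι} (hwt : w ∉ t)
    {F : (ι → κ → ℝ) → ℝ} (hF : Measurable F)
    (hFt : ∀ A A' : ι → κ → ℝ, (∀ i ∈ t, A i = A' i) → F A = F A') :
    ∫ ω, X ω w y * F (X ω) ∂μ = 0 := by
  classical
  have hrows : ∀ i, Measurable fun ω => X ω i := fun i => measurable_pi_lambda _ (hX i)
  -- `F ∘ X` factors through the rows indexed by `t`, extended by zero elsewhere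
  let ext : (t → κ → ℝ) → ι → κ → ℝ := fun r i => if h : i ∈ t then r ⟨i, h⟩ else 0
  have hext : Measurable ext := by
    refine measurable_pi_lambda _ fun i => ?_
    by_cases h : i ∈ t
    · simpa [ext, h] using measurable_pi_apply (⟨i, h⟩ : t)
    · simp [ext, h]
  have hindep := (hind.indepFun_finset {w} t (disjoint_singleton_left.2 hwt) hrows).comp
    ((measurable_pi_apply y).comp (measurable_pi_apply ⟨w, mem_singleton_self w⟩))
    (hF.comp hext)
  have hFX : (F ∘ ext) ∘ (fun ω (i : t) => X ω i) = fun ω => F (X ω) :=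
    funext fun ω => hFt _ _ fun i hi => by simp [ext, hi]
  rw [hFX] at hindep
  have := hindep.integral_mul_eq_mul_integral ((hX w y).aestronglyMeasurable)
    (hF.comp (measurable_pi_lambda _ hrows)).aestronglyMeasurable
  simpa [hmean] using this

theorem integrable_comp_of_ae_mem_compact [IsFiniteMeasure μ] {E : Type*} [TopologicalSpace E] [MeasurableSpace E]
    [OpensMeasurableSpace E] {F : E → ℝ} (hF : Continuous F) {K : Set E} (hK : IsCompact K)
    {X : Ω → E} (hX : Measurable X) (hXK : ∀ᵐ ω ∂μ, X ω ∈ K) :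
    Integrable (fun ω => F (X ω)) μ := by
  obtain ⟨C, hC⟩ := hK.exists_bound_of_continuousOn hF.continuousOn
  exact Integrable.of_bound (hF.measurable.comp hX).aestronglyMeasurable C
    (hXK.mono fun ω hω => hC _ hω)

variable [IsProbabilityMeasure μ]

theorem integral_norm_le_of_ae_norm_le {E : Type*} [NormedAddCommGroup E] {f : Ω → E} {C : ℝ}
    (hf : AEStronglyMeasurable f μ) (hfC : ∀ᵐ ω ∂μ, ‖f ω‖ ≤ C) :
    ∫ ω, ‖f ω‖ ∂μ ≤ C := by
  simpa using integral_mono_ae (Integrable.of_bound hf C hfC).norm (integrable_const C) hfC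

theorem integral_tsum_of_ae_norm_le {ι E : Type*} [Countable ι] [NormedAddCommGroup E]
    [NormedSpace ℝ E] {f : ι → Ω → E} {C : ι → ℝ} (hf : ∀ i, AEStronglyMeasurable (f i) μ)
    (hfC : ∀ i, ∀ᵐ ω ∂μ, ‖f i ω‖ ≤ C i) (hC : Summable C) :
    ∫ ω, ∑' i, f i ω ∂μ = ∑' i, ∫ ω, f i ω ∂μ :=
  (integral_tsum_of_summable_integral_norm (fun i => Integrable.of_bound (hf i) _ (hfC i))
    (hC.of_nonneg_of_le (fun _ => integral_nonneg fun _ => norm_nonneg _)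
      fun i => integral_norm_le_of_ae_norm_le (hf i) (hfC i))).symm

theorem integral_tsum_mul_tsum_of_ae_norm_le {ι ι' R : Type*} [Countable ι] [Countable ι']
    [NormedRing R] [NormedSpace ℝ R] [CompleteSpace R] {f : ι → Ω → R} {g : ι' → Ω → R}
    {C : ι → ℝ} {D : ι' → ℝ} (hf : ∀ i, AEStronglyMeasurable (f i) μ)
    (hg : ∀ j, AEStronglyMeasurable (g j) μ) (hfC : ∀ i, ∀ᵐ ω ∂μ, ‖f i ω‖ ≤ C i)
    (hgD : ∀ j, ∀ᵐ ω ∂μ, ‖g j ω‖ ≤ D j) (hC : Summable C) (hD : Summable D) :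
    ∫ ω, (∑' i, f i ω) * (∑' j, g j ω) ∂μ = ∑' p : ι × ι', ∫ ω, f p.1 ω * g p.2 ω ∂μ := by
  have hC0 : ∀ i, 0 ≤ C i := fun i =>
    let ⟨_, h⟩ := (hfC i).exists; (norm_nonneg _).trans h
  have hD0 : ∀ j, 0 ≤ D j := fun j =>
    let ⟨_, h⟩ := (hgD j).exists; (norm_nonneg _).trans h
  have hprod : ∀ᵐ ω ∂μ, (∑' i, f i ω) * (∑' j, g j ω) = ∑' p : ι × ι', f p.1 ω * g p.2 ω := by
    filter_upwards [ae_all_iff.2 hfC, ae_all_iff.2 hgD] with ω hω hω'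
    exact tsum_mul_tsum_of_summable_norm (hC.of_nonneg_of_le (fun _ => norm_nonneg _) hω)
      (hD.of_nonneg_of_le (fun _ => norm_nonneg _) hω')
  rw [integral_congr_ae hprod]
  refine integral_tsum_of_ae_norm_le (fun p => (hf p.1).mul (hg p.2)) (fun p => ?_)
    (hC.mul_of_nonneg hD hC0 hD0)
  filter_upwards [hfC p.1, hgD p.2] with ω h h'
  exact (norm_mul_le _ _).trans (mul_le_mul h h' (norm_nonneg _) (hC0 p.1))

end Integration

namespace Matrix

variable {V : Type*} [Fintype V] [DecidableEq V]

theorem pow_apply_mem_Icc {M : Matrix V V ℝ} (h0 : ∀ u v, 0 ≤ M u v)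
    (h1 : ∀ u, ∑ v, M u v ≤ 1) (k : ℕ) (u v : V) : (M ^ k) u v ∈ Set.Icc 0 1 := by
  induction k generalizing u with
  | zero => by_cases h : u = v <;> simp [h]
  | succ k ih =>
    rw [pow_succ', mul_apply]
    refine ⟨sum_nonneg fun w _ => mul_nonneg (h0 u w) (ih w).1, ?_⟩
    calc ∑ w, M u w * (M ^ k) w v ≤ ∑ w, M u w :=
          sum_le_sum fun w _ => mul_le_of_le_one_right (h0 u w) (ih w).2
      _ ≤ 1 := h1 u

theorem submatrix_pow_of_submatrix_eq_s10 {R : Type*} [Semiring R] {M : Matrix V V R}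
    {e : Equiv.Perm V} (he : M.submatrix e e = M) (k : ℕ) : (M ^ k).submatrix e e = M ^ k := by
  induction k with
  | zero => exact submatrix_one_equiv e
  | succ k ih => rw [pow_succ, ← submatrix_mul_equiv _ _ _ e, ih, he]

omit [DecidableEq V] in
theorem mul_apply_eq_zero_of_sum_perm_eq_zero {R : Type*} [Field R] [CharZero R]
    {A N : Matrix V V R} {u v : V} {S : Finset (Equiv.Perm V)} (hS : S.Nonempty)
    (hN : ∀ g ∈ S, ∀ x, N (g x) v = N x v) (hA : ∀ x, ∑ g ∈ S, A u (g x) = 0) :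
    (A * N) u v = 0 := by
  have : (#S : R) * (A * N) u v = 0 :=
    calc (#S : R) * (A * N) u v = ∑ g ∈ S, ∑ x, A u (g x) * N (g x) v := by
          rw [← nsmul_eq_mul, ← sum_const]
          exact sum_congr rfl fun g _ => (Equiv.sum_comp g fun x => A u x * N x v).symm
      _ = ∑ x, (∑ g ∈ S, A u (g x)) * N x v := by
          rw [sum_comm]
          exact sum_congr rfl fun x _ => by
            rw [sum_mul]; exact sum_congr rfl fun g hg => by rw [hN g hg]
      _ = 0 := by simp [hA]
  simpa [hS.card_pos.ne'] using this

end Matrix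

def splitPairs (j : ℕ) : Finset (ℕ × ℕ) :=
  (range j ×ˢ range j).filter fun p => p.1 + p.2 + 2 = j

theorem mem_splitPairs {j : ℕ} {p : ℕ × ℕ} : p ∈ splitPairs j ↔ p.1 + p.2 + 2 = j := by
  simp only [splitPairs, mem_filter, mem_product, mem_range]
  omega

theorem card_splitPairs_le (j : ℕ) : #(splitPairs j) ≤ j ^ 2 :=
  (card_filter_le _ _).trans (by simp [sq])

section TraceTerm

variable {V R : Type*} [Fintype V] [DecidableEq V]

/-- `Y_j(v, w)` of the paper, with `A` in place of `B`. -/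
def traceTerm [CommSemiring R] (M A : Matrix V V R) (j : ℕ) (v w : V) : R :=
  ∑ p ∈ splitPairs j, (A * M ^ p.1) v w * (A * M ^ p.2) w v

def traceSum [CommSemiring R] (M A : Matrix V V R) (j : ℕ) : R :=
  ∑ p ∈ splitPairs j, (A * M ^ p.1 * A * M ^ p.2).trace

variable [CommSemiring R] (M : Matrix V V R)

theorem traceSum_eq_sum_traceTerm (A : Matrix V V R) (j : ℕ) :
    traceSum M A j = ∑ v, ∑ w, traceTerm M A j v w := by
  simp only [traceSum, traceTerm, ← sum_comm (s := splitPairs j) (t := univ)]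
  refine sum_congr rfl fun p _ => ?_
  rw [mul_assoc _ A]
  simp only [trace, diag_apply, mul_apply (M := A * M ^ p.1)]

theorem traceTerm_comm (A : Matrix V V R) (j : ℕ) (v w : V) :
    traceTerm M A j v w = traceTerm M A j w v :=
  sum_equiv (Equiv.prodComm ℕ ℕ) (fun p => by simp [mem_splitPairs, add_comm])
    fun _ _ => mul_comm _ _

theorem traceTerm_self_eq_zero {A : Matrix V V R} {v : V} (hA : ∀ k, (A * M ^ k) v v = 0)
    (j : ℕ) : traceTerm M A j v v = 0 :=
  sum_eq_zero fun p _ => by rw [hA, zero_mul]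

theorem traceTerm_eq_sum_row (A : Matrix V V R) (j : ℕ) (v w : V) :
    traceTerm M A j v w = ∑ p ∈ splitPairs j, ∑ y, A w y * ((M ^ p.2) y v * (A * M ^ p.1) v w) := by
  refine sum_congr rfl fun p _ => ?_
  rw [mul_comm, mul_apply, sum_mul]
  exact sum_congr rfl fun y _ => by ring

theorem mul_pow_apply_congr_row {A A' : Matrix V V R} {v : V} (h : A v = A' v) (k : ℕ) (w : V) :
    (A * M ^ k) v w = (A' * M ^ k) v w := by
  simp only [mul_apply, h]

theorem traceTerm_congr_rows {A A' : Matrix V V R} {v w : V} (hv : A v = A' v) (hw : A w = A' w)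
    (j : ℕ) : traceTerm M A j v w = traceTerm M A' j v w := by
  simp only [traceTerm, mul_pow_apply_congr_row M hv, mul_pow_apply_congr_row M hw]

theorem traceTerm_submatrix {e : Equiv.Perm V} (he : M.submatrix e e = M) (A : Matrix V V R)
    (j : ℕ) (v w : V) : traceTerm M (A.submatrix e e) j v w = traceTerm M A j (e v) (e w) := by
  have key : ∀ k, A.submatrix e e * M ^ k = (A * M ^ k).submatrix e e := fun k => by
    conv_lhs => rw [← submatrix_pow_of_submatrix_eq_s10 he k, submatrix_mul_equiv]
  simp [traceTerm, key]

end TraceTerm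

section Bounds

variable {V : Type*} [Fintype V] [DecidableEq V] {M : Matrix V V ℝ}

theorem abs_mul_pow_apply_le {A : Matrix V V ℝ} {c : ℝ} (hA : ∀ u v, |A u v| ≤ c)
    (hM : ∀ k u v, (M ^ k) u v ∈ Set.Icc 0 1) (k : ℕ) (u v : V) :
    |(A * M ^ k) u v| ≤ Fintype.card V * c := by
  calc |(A * M ^ k) u v| ≤ ∑ x, |A u x| * |(M ^ k) x v| := by
        simpa only [mul_apply, abs_mul] using abs_sum_le_sum_abs (fun x => A u x * (M ^ k) x v) univ
    _ ≤ ∑ _x : V, c := sum_le_sum fun x _ => by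
        rw [abs_of_nonneg (hM k x v).1]
        exact (mul_le_of_le_one_right (abs_nonneg _) (hM k x v).2).trans (hA u x)
    _ = Fintype.card V * c := by simp

theorem abs_traceTerm_le {A : Matrix V V ℝ} {c : ℝ} (hA : ∀ u v, |A u v| ≤ c)
    (hM : ∀ k u v, (M ^ k) u v ∈ Set.Icc 0 1) (j : ℕ) (v w : V) :
    |traceTerm M A j v w| ≤ j ^ 2 * (Fintype.card V * c) ^ 2 := by
  have hc : 0 ≤ Fintype.card V * c := (abs_nonneg _).trans (abs_mul_pow_apply_le hA hM 0 v v)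
  calc |traceTerm M A j v w| ≤ ∑ _p ∈ splitPairs j, (Fintype.card V * c) ^ 2 :=
        (abs_sum_le_sum_abs _ _).trans <| sum_le_sum fun p _ => by
          rw [abs_mul, sq]
          exact mul_le_mul (abs_mul_pow_apply_le hA hM _ _ _) (abs_mul_pow_apply_le hA hM _ _ _)
            (abs_nonneg _) hc
    _ ≤ j ^ 2 * (Fintype.card V * c) ^ 2 := by
        rw [sum_const, nsmul_eq_mul]
        gcongr
        exact_mod_cast card_splitPairs_le j

theorem abs_traceSum_le {A : Matrix V V ℝ} {c : ℝ} (hA : ∀ u v, |A u v| ≤ c)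
    (hM : ∀ k u v, (M ^ k) u v ∈ Set.Icc 0 1) (j : ℕ) :
    |traceSum M A j| ≤ Fintype.card V ^ 2 * (Fintype.card V * c) ^ 2 * j ^ 2 := by
  rw [traceSum_eq_sum_traceTerm]
  calc |∑ v, ∑ w, traceTerm M A j v w| ≤ ∑ _v : V, ∑ _w : V, j ^ 2 * (Fintype.card V * c) ^ 2 :=
        (abs_sum_le_sum_abs _ _).trans <| sum_le_sum fun v _ =>
          (abs_sum_le_sum_abs _ _).trans <| sum_le_sum fun w _ => abs_traceTerm_le hA hM j v w
    _ = _ := by simp; ring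

theorem continuous_traceTerm (M : Matrix V V ℝ) (j : ℕ) (v w : V) :
    Continuous fun A : V → V → ℝ => traceTerm M (of A) j v w := by
  unfold traceTerm; fun_prop

theorem continuous_traceSum (M : Matrix V V ℝ) (j : ℕ) :
    Continuous fun A : V → V → ℝ => traceSum M (of A) j := by
  unfold traceSum; fun_prop

end Bounds

section RandomMatrix

variable {V : Type*} [Fintype V] [DecidableEq V] {Ω : Type*} [MeasurableSpace Ω]
  {μ : Measure Ω} [IsProbabilityMeasure μ] {X : Ω → V → V → ℝ} {c : ℝ}

omit [DecidableEq V] in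
theorem integrable_comp_of_ae_abs_le (hX : ∀ u v, Measurable fun ω => X ω u v)
    (hbound : ∀ᵐ ω ∂μ, ∀ u v, |X ω u v| ≤ c) {F : (V → V → ℝ) → ℝ} (hF : Continuous F) :
    Integrable (fun ω => F (X ω)) μ :=
  integrable_comp_of_ae_mem_compact hF
    (isCompact_univ_pi fun _ => isCompact_univ_pi fun _ => isCompact_Icc (a := -c) (b := c))
    (measurable_pi_lambda _ fun u => measurable_pi_lambda _ (hX u))
    (hbound.mono fun _ h u _ v _ => abs_le.1 (h u v))

theorem measurable_traceSum (M : Matrix V V ℝ) (hX : ∀ u v, Measurable fun ω => X ω u v)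
    (j : ℕ) : Measurable fun ω => traceSum M (of (X ω)) j :=
  (continuous_traceSum M j).measurable.comp
    (measurable_pi_lambda _ fun u => measurable_pi_lambda _ (hX u))

variable (M : Matrix V V ℝ) (hX : ∀ u v, Measurable fun ω => X ω u v)
  (hind : iIndepFun (fun u ω => X ω u) μ) (hmean : ∀ u v, ∫ ω, X ω u v ∂μ = 0)
  (hbound : ∀ᵐ ω ∂μ, ∀ u v, |X ω u v| ≤ c)
include hX hind hmean hbound

theorem integral_traceTerm_mul_eq_zero {t : Finset V} {v w : V} (hv : v ∈ t) (hw : w ∉ t)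
    {F : (V → V → ℝ) → ℝ} (hF : Continuous F)
    (hFt : ∀ A A' : V → V → ℝ, (∀ u ∈ t, A u = A' u) → F A = F A') (j : ℕ) :
    ∫ ω, traceTerm M (of (X ω)) j v w * F (X ω) ∂μ = 0 := by
  set G : ℕ × ℕ → V → (V → V → ℝ) → ℝ := fun p y A => (M ^ p.2) y v * ((of A * M ^ p.1) v w * F A)
  have hG : ∀ p y, Continuous (G p y) := fun p y => by fun_prop
  have hint : ∀ p y, Integrable (fun ω => X ω w y * G p y (X ω)) μ := fun p y =>
    integrable_comp_of_ae_abs_le hX hbound (F := fun A => A w y * G p y A) (by fun_prop)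
  have hsum : ∀ ω, traceTerm M (of (X ω)) j v w * F (X ω) =
      ∑ p ∈ splitPairs j, ∑ y, X ω w y * G p y (X ω) := fun ω => by
    simp only [traceTerm_eq_sum_row, sum_mul, mul_assoc, G]; rfl
  simp only [hsum]
  rw [integral_finsetSum _ fun p _ => integrable_finsetSum _ fun y _ => hint p y]
  refine sum_eq_zero fun p _ => ?_
  rw [integral_finsetSum _ fun y _ => hint p y]
  refine sum_eq_zero fun y _ => integral_mul_eq_zero_of_iIndepFun_rows hX hind (hmean w y) hw
    (hG p y).measurable fun A A' hA => ?_
  simp only [G, mul_pow_apply_congr_row M (A := of A) (A' := of A') (hA v hv), hFt A A' hA]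

variable (hdiag : ∀ ω k v, (of (X ω) * M ^ k) v v = 0)
include hdiag

theorem integral_traceTerm_mul_traceTerm_eq_zero {v w v' w' : V} (hvw : v ≠ w)
    (h : s(v', w') ≠ s(v, w)) (i j : ℕ) :
    ∫ ω, traceTerm M (of (X ω)) i v w * traceTerm M (of (X ω)) j v' w' ∂μ = 0 := by
  by_cases hd : v' = w'
  · simp [hd, traceTerm_self_eq_zero M (hdiag _ · w')]
  have hcross : ∀ a b, a ≠ b → b ≠ v' → b ≠ w' →
      ∫ ω, traceTerm M (of (X ω)) i a b * traceTerm M (of (X ω)) j v' w' ∂μ = 0 :=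
    fun a b hab hbv' hbw' => integral_traceTerm_mul_eq_zero M hX hind hmean hbound
      (t := {a, v', w'}) (by simp) (by simp [hab.symm, hbv', hbw'])
      (continuous_traceTerm M j v' w')
      (fun A A' hA => traceTerm_congr_rows M (hA v' (by simp)) (hA w' (by simp)) j) i
  by_cases hw : w ≠ v' ∧ w ≠ w'
  · exact hcross v w hvw hw.1 hw.2
  · have hv : v ≠ v' ∧ v ≠ w' := by grind [Sym2.eq_iff]
    simpa only [traceTerm_comm M _ i w v] using hcross w v hvw.symm hv.1 hv.2

theorem integral_traceSum_eq_zero (j : ℕ) : ∫ ω, traceSum M (of (X ω)) j ∂μ = 0 := by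
  simp only [traceSum_eq_sum_traceTerm]
  rw [integral_finsetSum _ fun v _ => integrable_finsetSum _ fun w _ =>
    integrable_comp_of_ae_abs_le hX hbound (continuous_traceTerm M j v w)]
  refine sum_eq_zero fun v _ => ?_
  rw [integral_finsetSum _ fun w _ =>
    integrable_comp_of_ae_abs_le hX hbound (continuous_traceTerm M j v w)]
  refine sum_eq_zero fun w _ => ?_
  by_cases hvw : v = w
  · simp [hvw, traceTerm_self_eq_zero M (hdiag _ · w)]
  · simpa using integral_traceTerm_mul_eq_zero M hX hind hmean hbound (t := {v}) (w := w)
      (mem_singleton_self v)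
      (by simpa [eq_comm] using hvw) (F := fun _ => 1) continuous_const (fun _ _ _ => rfl) j

theorem integral_traceTerm_mul_traceSum {v w : V} (hvw : v ≠ w) (i j : ℕ) :
    ∫ ω, traceTerm M (of (X ω)) i v w * traceSum M (of (X ω)) j ∂μ =
      2 * ∫ ω, traceTerm M (of (X ω)) i v w * traceTerm M (of (X ω)) j v w ∂μ := by
  have hint : ∀ q : V × V, Integrable
      (fun ω => traceTerm M (of (X ω)) i v w * traceTerm M (of (X ω)) j q.1 q.2) μ := fun q =>
    integrable_comp_of_ae_abs_le hX hbound
      ((continuous_traceTerm M i v w).mul (continuous_traceTerm M j q.1 q.2))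
  simp only [traceSum_eq_sum_traceTerm, ← Fintype.sum_prod_type', mul_sum]
  rw [integral_finsetSum _ fun q _ => hint q,
    Fintype.sum_eq_add (v, w) (w, v) (by simp [hvw]) fun q hq =>
      integral_traceTerm_mul_traceTerm_eq_zero M hX hind hmean hbound hdiag hvw
        (by rcases q; simpa [Sym2.eq_iff] using hq) i j]
  simp only [traceTerm_comm M _ j w v]
  ring

theorem integral_traceSum_mul_traceSum (i j : ℕ) :
    ∫ ω, traceSum M (of (X ω)) i * traceSum M (of (X ω)) j ∂μ =
      2 * ∑ v, ∫ ω, ∑ w ∈ univ.erase v,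
        traceTerm M (of (X ω)) i v w * traceTerm M (of (X ω)) j v w ∂μ := by
  have hint : ∀ v w, Integrable
      (fun ω => traceTerm M (of (X ω)) i v w * traceSum M (of (X ω)) j) μ := fun v w =>
    integrable_comp_of_ae_abs_le hX hbound
      ((continuous_traceTerm M i v w).mul (continuous_traceSum M j))
  have hint' : ∀ v w, Integrable
      (fun ω => traceTerm M (of (X ω)) i v w * traceTerm M (of (X ω)) j v w) μ := fun v w =>
    integrable_comp_of_ae_abs_le hX hbound
      ((continuous_traceTerm M i v w).mul (continuous_traceTerm M j v w))
  calc ∫ ω, traceSum M (of (X ω)) i * traceSum M (of (X ω)) j ∂μ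
      = ∑ v, ∑ w, ∫ ω, traceTerm M (of (X ω)) i v w * traceSum M (of (X ω)) j ∂μ := by
        simp only [traceSum_eq_sum_traceTerm M _ i, sum_mul]
        rw [integral_finsetSum _ fun v _ => integrable_finsetSum _ fun w _ => hint v w]
        exact sum_congr rfl fun v _ => integral_finsetSum _ fun w _ => hint v w
    _ = ∑ v, 2 * ∫ ω, ∑ w ∈ univ.erase v,
          traceTerm M (of (X ω)) i v w * traceTerm M (of (X ω)) j v w ∂μ := by
        refine sum_congr rfl fun v _ => ?_
        rw [← add_sum_erase _ _ (mem_univ v), integral_finsetSum _ fun w _ => hint' v w, mul_sum]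
        simp only [traceTerm_self_eq_zero M (hdiag _ · v), zero_mul, integral_zero, zero_add]
        exact sum_congr rfl fun w hw => integral_traceTerm_mul_traceSum M hX hind hmean hbound
          hdiag (ne_of_mem_erase hw).symm i j
    _ = _ := (mul_sum _ _ _).symm

end RandomMatrix

theorem integral_sum_erase_traceTerm_mul_of_map_eq {V Ω : Type*} [Fintype V] [DecidableEq V]
    [MeasurableSpace Ω] {μ : Measure Ω} {X : Ω → V → V → ℝ}
    (hX : ∀ u v, Measurable fun ω => X ω u v) {M : Matrix V V ℝ} {e : Equiv.Perm V}
    (hMe : M.submatrix e e = M)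
    (hXe : Measure.map (fun ω u v => X ω (e u) (e v)) μ = Measure.map X μ) (o : V) (i j : ℕ) :
    ∫ ω, ∑ w ∈ univ.erase (e o),
        traceTerm M (of (X ω)) i (e o) w * traceTerm M (of (X ω)) j (e o) w ∂μ =
      ∫ ω, ∑ w ∈ univ.erase o, traceTerm M (of (X ω)) i o w * traceTerm M (of (X ω)) j o w ∂μ := by
  let F : (V → V → ℝ) → ℝ := fun A =>
    ∑ w ∈ univ.erase o, traceTerm M (of A) i o w * traceTerm M (of A) j o w
  have hF : Continuous F := continuous_finsetSum _ fun w _ =>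
    (continuous_traceTerm M i o w).mul (continuous_traceTerm M j o w)
  have hXm : Measurable X := measurable_pi_lambda _ fun u => measurable_pi_lambda _ (hX u)
  have hident : IdentDistrib (fun ω u v => X ω (e u) (e v)) X μ μ :=
    ⟨(measurable_pi_lambda _ fun u => measurable_pi_lambda _ fun v => hX (e u) (e v)).aemeasurable,
      hXm.aemeasurable, hXe⟩
  have hFe : ∀ ω, F (fun u v => X ω (e u) (e v)) = ∑ w ∈ univ.erase (e o),
      traceTerm M (of (X ω)) i (e o) w * traceTerm M (of (X ω)) j (e o) w := fun ω => by
    refine sum_equiv e (by simp) fun w _ => ?_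
    exact congrArg₂ (· * ·) (traceTerm_submatrix M hMe (of (X ω)) i o w)
      (traceTerm_submatrix M hMe (of (X ω)) j o w)
  calc _ = ∫ ω, F (fun u v => X ω (e u) (e v)) ∂μ := by simp only [hFe]
    _ = ∫ ω, F (X ω) ∂μ := (hident.comp hF.measurable).integral_eq

section RandomWalk

variable {V : Type*} {G : SimpleGraph V} [DecidableRel G.Adj] {d : ℕ} {M : Matrix V V ℝ}
  (hM : ∀ u v, M u v = if G.Adj u v then (1 : ℝ) / d else 0)
include hM

theorem randomWalk_apply_mem_Icc (u v : V) : M u v ∈ Set.Icc 0 1 := by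
  rw [hM]
  split_ifs
  · exact ⟨by positivity, one_div (d : ℝ) ▸ Nat.cast_inv_le_one d⟩
  · simp

theorem randomWalk_pow_apply_mem_Icc [Fintype V] [DecidableEq V] (hreg : ∀ v, G.degree v = d)
    (k : ℕ) (u v : V) : (M ^ k) u v ∈ Set.Icc 0 1 := by
  refine pow_apply_mem_Icc (fun u v => (randomWalk_apply_mem_Icc hM u v).1) (fun u => ?_) k u v
  simp only [hM, sum_ite, sum_const_zero, add_zero, sum_const, nsmul_eq_mul,
    ← G.neighborFinset_eq_filter, G.card_neighborFinset_eq_degree, hreg]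
  rcases eq_or_ne (d : ℝ) 0 with h | h <;> simp [h]

theorem randomWalk_submatrix {e : Equiv.Perm V} (he : ∀ a b, G.Adj (e a) (e b) ↔ G.Adj a b) :
    M.submatrix e e = M := by
  ext a b
  simp [hM, he]

theorem randomWalk_mul_pow_apply_self_eq_zero [Fintype V] [DecidableEq V] {A : Matrix V V ℝ}
    {v : V} (hA : ∀ x, ∑ g ∈ univ.filter (fun e : Equiv.Perm V =>
      (∀ a b, G.Adj (e a) (e b) ↔ G.Adj a b) ∧ e v = v), A v (g x) = 0) (k : ℕ) :
    (A * M ^ k) v v = 0 := by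
  refine mul_apply_eq_zero_of_sum_perm_eq_zero ⟨1, by simp⟩ (fun g hg x => ?_) hA
  obtain ⟨he, hgv⟩ := (mem_filter.1 hg).2
  simpa [hgv] using congr_fun₂ (submatrix_pow_of_submatrix_eq_s10 (randomWalk_submatrix hM he) k) x v

variable {Ω : Type*} [MeasurableSpace Ω] {μ : Measure Ω} {X : Ω → V → V → ℝ} {c : ℝ}
  (hbound : ∀ᵐ ω ∂μ, ∀ u v, |X ω u v| ≤ c * M u v)
include hbound

theorem integral_eq_zero_of_abs_le_mul_randomWalk
    (hmean : ∀ u v, G.Adj u v → ∫ ω, X ω u v ∂μ = 0) (u v : V) : ∫ ω, X ω u v ∂μ = 0 := by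
  by_cases huv : G.Adj u v
  · exact hmean u v huv
  · refine integral_eq_zero_of_ae (hbound.mono fun ω h => ?_)
    simpa [hM, huv] using h u v

theorem ae_abs_le_abs_of_abs_le_mul_randomWalk : ∀ᵐ ω ∂μ, ∀ u v, |X ω u v| ≤ |c| :=
  hbound.mono fun _ h u v =>
    have hMuv := randomWalk_apply_mem_Icc hM u v
    (h u v).trans <| (mul_le_mul_of_nonneg_right (le_abs_self c) hMuv.1).trans <|
      mul_le_of_le_one_right (abs_nonneg c) hMuv.2

end RandomWalk

section LinearStatistic

/-- `T_G(f)` of the paper for `f = ∑ a_j z^j`, as a function of the trace sums `S_j`, on `n`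
vertices. -/
noncomputable def linearStatistic (n : ℕ) (a : ℕ → ℂ) (S : ℕ → ℝ) : ℂ :=
  ((√(n : ℝ))⁻¹ : ℝ) * ∑' j, a j * ((j : ℂ) / 2) * (S j : ℂ)

variable {Ω : Type*} [MeasurableSpace Ω] {μ : Measure Ω} {S : ℕ → Ω → ℝ} {K : ℝ}

theorem aestronglyMeasurable_coeff_mul (hS : ∀ j, AEStronglyMeasurable (S j) μ) (a : ℕ → ℂ)
    (j : ℕ) : AEStronglyMeasurable (fun ω => a j * ((j : ℂ) / 2) * (S j ω : ℂ)) μ :=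
  (Complex.continuous_ofReal.comp_aestronglyMeasurable (hS j)).const_mul _

theorem ae_norm_coeff_mul_le (hSK : ∀ j, ∀ᵐ ω ∂μ, |S j ω| ≤ K * j ^ 2) (a : ℕ → ℂ) (j : ℕ) :
    ∀ᵐ ω ∂μ, ‖a j * ((j : ℂ) / 2) * (S j ω : ℂ)‖ ≤ K / 2 * (‖a j‖ * (j : ℝ) ^ 3) := by
  filter_upwards [hSK j] with ω h
  have hj : ‖(j : ℂ) / 2‖ = j / 2 := by simp
  rw [norm_mul, norm_mul, hj, Complex.norm_real, Real.norm_eq_abs]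
  calc ‖a j‖ * (j / 2) * |S j ω| ≤ ‖a j‖ * (j / 2) * (K * j ^ 2) := by gcongr
    _ = K / 2 * (‖a j‖ * (j : ℝ) ^ 3) := by ring

variable [IsProbabilityMeasure μ] (hS : ∀ j, AEStronglyMeasurable (S j) μ)
  (hSK : ∀ j, ∀ᵐ ω ∂μ, |S j ω| ≤ K * j ^ 2)
include hS hSK

theorem integral_linearStatistic_eq_zero {a : ℕ → ℂ}
    (ha : ∃ r, 1 < r ∧ Summable fun k => ‖a k‖ * r ^ k) (hS0 : ∀ j, ∫ ω, S j ω ∂μ = 0) (n : ℕ) :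
    ∫ ω, linearStatistic n a (S · ω) ∂μ = 0 := by
  obtain ⟨r, hr, ha⟩ := ha
  simp only [linearStatistic]
  rw [integral_const_mul, integral_tsum_of_ae_norm_le (aestronglyMeasurable_coeff_mul hS a)
    (ae_norm_coeff_mul_le hSK a)
    ((summable_norm_mul_pow_of_summable_norm_mul_geometric hr ha 3).mul_left _)]
  simp [integral_const_mul, integral_complex_ofReal, hS0]

theorem integral_linearStatistic_mul {a b : ℕ → ℂ}
    (ha : ∃ r, 1 < r ∧ Summable fun k => ‖a k‖ * r ^ k)
    (hb : ∃ r, 1 < r ∧ Summable fun k => ‖b k‖ * r ^ k) {n : ℕ} (hn : n ≠ 0) {α : ℕ → ℕ → ℝ}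
    (hSS : ∀ i j, ∫ ω, S i ω * S j ω ∂μ = 2 * n * α i j) :
    ∫ ω, linearStatistic n a (S · ω) * linearStatistic n b (S · ω) ∂μ =
      (1 / 2 : ℂ) * ∑' p : ℕ × ℕ, (p.1 : ℂ) * (p.2 : ℂ) * (α p.1 p.2 : ℂ) * a p.1 * b p.2 := by
  obtain ⟨r, hr, ha⟩ := ha
  obtain ⟨r', hr', hb⟩ := hb
  have hsq : (√(n : ℝ))⁻¹ * (√(n : ℝ))⁻¹ = (n : ℝ)⁻¹ := by
    rw [← mul_inv, Real.mul_self_sqrt (Nat.cast_nonneg _)]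
  simp only [linearStatistic, mul_mul_mul_comm _ (∑' j, a j * _ * _), ← Complex.ofReal_mul, hsq]
  rw [integral_const_mul, integral_tsum_mul_tsum_of_ae_norm_le
    (aestronglyMeasurable_coeff_mul hS a) (aestronglyMeasurable_coeff_mul hS b)
    (ae_norm_coeff_mul_le hSK a) (ae_norm_coeff_mul_le hSK b)
    ((summable_norm_mul_pow_of_summable_norm_mul_geometric hr ha 3).mul_left _)
    ((summable_norm_mul_pow_of_summable_norm_mul_geometric hr' hb 3).mul_left _),
    ← tsum_mul_left, ← tsum_mul_left]
  refine tsum_congr fun p => ?_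
  have hp : ∫ ω, a p.1 * ((p.1 : ℂ) / 2) * (S p.1 ω : ℂ) *
        (b p.2 * ((p.2 : ℂ) / 2) * (S p.2 ω : ℂ)) ∂μ =
      a p.1 * b p.2 * (p.1 : ℂ) * (p.2 : ℂ) / 4 * ((∫ ω, S p.1 ω * S p.2 ω ∂μ : ℝ) : ℂ) := by
    rw [← integral_complex_ofReal, ← integral_const_mul]
    congr 1 with ω
    push_cast
    ring
  rw [hp, hSS]
  push_cast
  field_simp
  ring

end LinearStatistic

theorem covariance_eq_H_G_general {V : Type*} [Fintype V] [DecidableEq V]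
    (G : SimpleGraph V) [DecidableRel G.Adj] (o : V) (d : ℕ)
    (hreg : ∀ v : V, G.degree v = d)
    (htrans : ∀ u v : V, ∃ e : Equiv.Perm V,
      (∀ a b : V, G.Adj (e a) (e b) ↔ G.Adj a b) ∧ e u = v)
    (M : Matrix V V ℝ)
    (hM : ∀ u v : V, M u v = if G.Adj u v then (1 : ℝ) / d else 0)
    {Ω : Type*} [MeasurableSpace Ω] (μ : Measure Ω) [IsProbabilityMeasure μ]
    (B : Ω → Matrix V V ℝ) (hBmeas : ∀ u v, Measurable fun ω => B ω u v)
    (c₁ : ℝ)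
    (hmean : ∀ u v : V, G.Adj u v → (∫ ω, B ω u v ∂μ) = 0)
    (hBbound : ∀ᵐ ω ∂μ, ∀ u v, |B ω u v| ≤ c₁ * M u v)
    (hrows : iIndepFun (m := fun _ : V => (inferInstance : MeasurableSpace (V → ℝ)))
      (fun u ω => fun v => B ω u v) μ)
    (hstab : ∀ ω, ∀ u v : V,
      ∑ g ∈ Finset.univ.filter
          (fun e : Equiv.Perm V =>
            (∀ a b : V, G.Adj (e a) (e b) ↔ G.Adj a b) ∧ e u = u),
        B ω u (g v) = 0)
    (hinv : ∀ e : Equiv.Perm V, (∀ a b : V, G.Adj (e a) (e b) ↔ G.Adj a b) →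
      Measure.map (fun ω => fun u v : V => B ω (e u) (e v)) μ =
        Measure.map (fun ω => fun u v : V => B ω u v) μ)
    (Y : ℕ → V → V → Ω → ℝ)
    (hY : ∀ j v w ω, Y j v w ω =
      ∑ p ∈ (Finset.range j ×ˢ Finset.range j).filter (fun p => p.1 + p.2 + 2 = j),
        (B ω * M ^ p.1) v w * (B ω * M ^ p.2) w v)
    (α : ℕ → ℕ → ℝ)
    (hα : ∀ i j, α i j = ∫ ω, ∑ v ∈ Finset.univ.erase o, Y i o v ω * Y j o v ω ∂μ)
    (a b : ℕ → ℂ)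
    (hf : ∃ r : ℝ, 1 < r ∧ Summable fun k => ‖a k‖ * r ^ k)
    (hg : ∃ r : ℝ, 1 < r ∧ Summable fun k => ‖b k‖ * r ^ k)
    (Tf Tg : Ω → ℂ)
    (hTf : ∀ ω, Tf ω = ((Real.sqrt (Fintype.card V))⁻¹ : ℝ) *
      ∑' j : ℕ, a j * ((j : ℂ) / 2) *
        (∑ p ∈ (Finset.range j ×ˢ Finset.range j).filter (fun p => p.1 + p.2 + 2 = j),
          (B ω * M ^ p.1 * (B ω) * M ^ p.2).trace : ℝ))
    (hTg : ∀ ω, Tg ω = ((Real.sqrt (Fintype.card V))⁻¹ : ℝ) *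
      ∑' j : ℕ, b j * ((j : ℂ) / 2) *
        (∑ p ∈ (Finset.range j ×ˢ Finset.range j).filter (fun p => p.1 + p.2 + 2 = j),
          (B ω * M ^ p.1 * (B ω) * M ^ p.2).trace : ℝ)) :
    (∫ ω, Tf ω ∂μ) = 0 ∧
    (∫ ω, Tf ω * Tg ω ∂μ) =
      (1 / 2 : ℂ) *
        ∑' p : ℕ × ℕ, (p.1 : ℂ) * (p.2 : ℂ) * (α p.1 p.2 : ℂ) * a p.1 * b p.2 := by
  let X : Ω → V → V → ℝ := fun ω u v => B ω u v
  obtain rfl : Y = fun j v w ω => traceTerm M (of (X ω)) j v w := by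
    funext j v w ω; exact hY j v w ω
  have hX : ∀ u v, Measurable fun ω => X ω u v := hBmeas
  have hind : iIndepFun (fun u ω => X ω u) μ := hrows
  have hmean' := integral_eq_zero_of_abs_le_mul_randomWalk hM (X := X) hBbound hmean
  have hbound := ae_abs_le_abs_of_abs_le_mul_randomWalk hM (X := X) hBbound
  have hdiag : ∀ ω k v, (of (X ω) * M ^ k) v v = 0 := fun ω k v =>
    randomWalk_mul_pow_apply_self_eq_zero hM (hstab ω v) k
  have hrow : ∀ i j v, ∫ ω, ∑ w ∈ univ.erase v,
      traceTerm M (of (X ω)) i v w * traceTerm M (of (X ω)) j v w ∂μ = α i j := fun i j v => by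
    obtain ⟨e, he, rfl⟩ := htrans o v
    rw [hα]
    exact integral_sum_erase_traceTerm_mul_of_map_eq hX (randomWalk_submatrix hM he) (hinv e he)
      o i j
  have hSS : ∀ i j, ∫ ω, traceSum M (of (X ω)) i * traceSum M (of (X ω)) j ∂μ =
      2 * Fintype.card V * α i j := fun i j => by
    simp only [integral_traceSum_mul_traceSum M hX hind hmean' hbound hdiag, hrow, sum_const,
      card_univ, nsmul_eq_mul]
    ring
  have hSm := fun j => (measurable_traceSum M hX j).aestronglyMeasurable (μ := μ)
  have hSK : ∀ j, ∀ᵐ ω ∂μ, |traceSum M (of (X ω)) j| ≤ _ * j ^ 2 := fun j =>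
    hbound.mono fun ω h => abs_traceSum_le h (randomWalk_pow_apply_mem_Icc hM hreg) j
  obtain rfl : Tf = fun ω => linearStatistic (Fintype.card V) a (traceSum M (of (X ω))) :=
    funext hTf
  obtain rfl : Tg = fun ω => linearStatistic (Fintype.card V) b (traceSum M (of (X ω))) :=
    funext hTg
  exact ⟨integral_linearStatistic_eq_zero hSm hSK hf
      (integral_traceSum_eq_zero M hX hind hmean' hbound hdiag) _,
    integral_linearStatistic_mul hSm hSK hf hg (Fintype.card_pos_iff.2 ⟨o⟩).ne' hSS⟩

/-- For a finite vertex-transitive graph `G` and a random matrix `B` as in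
the standing assumptions, for all power series `f, g` of radius of convergence `> 1`:
`E[T_G(f)] = 0` and `E[T_G(f) T_G(g)] = H_G(f,g)`, where
`H_G(f,g) = (1/2) ∑_{i,j} i j α_{ij} [z^i]f [z^j]g`. -/
theorem covariance_eq_H_G {V : Type*} [Fintype V] [DecidableEq V]
    (G : SimpleGraph V) [DecidableRel G.Adj] (o : V) (d : ℕ)
    (hreg : ∀ v : V, G.degree v = d)
    (htrans : ∀ u v : V, ∃ e : Equiv.Perm V,
      (∀ a b : V, G.Adj (e a) (e b) ↔ G.Adj a b) ∧ e u = v)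
    (M : Matrix V V ℝ)
    (hM : ∀ u v : V, M u v = if G.Adj u v then (1 : ℝ) / d else 0)
    {Ω : Type*} [MeasurableSpace Ω] (μ : Measure Ω) [IsProbabilityMeasure μ]
    (B : Ω → Matrix V V ℝ) (hBmeas : ∀ u v, Measurable fun ω => B ω u v)
    (c₁ : ℝ) (hc₁ : 0 < c₁)
    (hmean : ∀ u v : V, G.Adj u v → (∫ ω, B ω u v ∂μ) = 0)
    (hvar : ∀ u v : V, G.Adj u v → (∫ ω, (B ω u v) ^ 2 ∂μ) = 1)
    (hBbound : ∀ᵐ ω ∂μ, ∀ u v, |B ω u v| ≤ c₁ * M u v)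
    (hrows : iIndepFun (m := fun _ : V => (inferInstance : MeasurableSpace (V → ℝ)))
      (fun u ω => fun v => B ω u v) μ)
    (hstab : ∀ ω, ∀ u v : V,
      ∑ g ∈ Finset.univ.filter
          (fun e : Equiv.Perm V =>
            (∀ a b : V, G.Adj (e a) (e b) ↔ G.Adj a b) ∧ e u = u),
        B ω u (g v) = 0)
    (hinv : ∀ e : Equiv.Perm V, (∀ a b : V, G.Adj (e a) (e b) ↔ G.Adj a b) →
      Measure.map (fun ω => fun u v : V => B ω (e u) (e v)) μ =
        Measure.map (fun ω => fun u v : V => B ω u v) μ)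
    (Y : ℕ → V → V → Ω → ℝ)
    (hY : ∀ j v w ω, Y j v w ω =
      ∑ p ∈ (Finset.range j ×ˢ Finset.range j).filter (fun p => p.1 + p.2 + 2 = j),
        (B ω * M ^ p.1) v w * (B ω * M ^ p.2) w v)
    (α : ℕ → ℕ → ℝ)
    (hα : ∀ i j, α i j = ∫ ω, ∑ v ∈ Finset.univ.erase o, Y i o v ω * Y j o v ω ∂μ)
    (a b : ℕ → ℂ)
    (hf : ∃ r : ℝ, 1 < r ∧ Summable fun k => ‖a k‖ * r ^ k)
    (hg : ∃ r : ℝ, 1 < r ∧ Summable fun k => ‖b k‖ * r ^ k)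
    (Tf Tg : Ω → ℂ)
    (hTf : ∀ ω, Tf ω = ((Real.sqrt (Fintype.card V))⁻¹ : ℝ) *
      ∑' j : ℕ, a j * ((j : ℂ) / 2) *
        (∑ p ∈ (Finset.range j ×ˢ Finset.range j).filter (fun p => p.1 + p.2 + 2 = j),
          (B ω * M ^ p.1 * (B ω) * M ^ p.2).trace : ℝ))
    (hTg : ∀ ω, Tg ω = ((Real.sqrt (Fintype.card V))⁻¹ : ℝ) *
      ∑' j : ℕ, b j * ((j : ℂ) / 2) *
        (∑ p ∈ (Finset.range j ×ˢ Finset.range j).filter (fun p => p.1 + p.2 + 2 = j),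
          (B ω * M ^ p.1 * (B ω) * M ^ p.2).trace : ℝ)) :
    (∫ ω, Tf ω ∂μ) = 0 ∧
    (∫ ω, Tf ω * Tg ω ∂μ) =
      (1 / 2 : ℂ) *
        ∑' p : ℕ × ℕ, (p.1 : ℂ) * (p.2 : ℂ) * (α p.1 p.2 : ℂ) * a p.1 * b p.2 :=
  covariance_eq_H_G_general G o d hreg htrans M hM μ B hBmeas c₁ hmean hBbound hrows hstab hinv Y hY
    α hα a b hf hg Tf Tg hTf hTg
end
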